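/- arXiv:1902.01792 — 3 statements merged into one kernel-verified Lean document; each statement's English description precedes it below -/
import Mathlib

section
/- Let γ>1 and v₋>0. There exists a constant c₂>0 (depending only on γ and v₋) such that for every w with 0<w<v₋ and every v with v≥3v₋, one has Q(v|w) ≥ c₂|v−w|. -/
/-- Pressure `p(v) = v^(-γ)`. -/
noncomputable def pres (γ v : ℝ) : ℝ := v ^ (-γ)

/-- `Q(v) = v^(1-γ)/(γ-1)`. -/
noncomputable def Qf (γ v : ℝ) : ℝ := v ^ (1 - γ) / (γ - 1)

/-- Relative functional `Q(v|w) = Q(v) - Q(w) - Q'(w)(v-w)` with `Q'(w) = -p(w)`. -/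
noncomputable def Qrel (γ v w : ℝ) : ℝ := Qf γ v - Qf γ w + pres γ w * (v - w)

/-! `Q` is convex on `(0, ∞)` with `Q' = -p`, so `Q(v|w) ≥ 0` for positive `v, w`. The three-point
identity `Q(v|w) = Q(2v₋|w) + Q(v|2v₋) + (p(w) - p(2v₋))(v - 2v₋)` then leaves
`Q(v|w) ≥ (p(v₋) - p(2v₋))(v - 2v₋)`, and `v - 2v₋ ≥ v/3 ≥ (v - w)/3` once `v ≥ 3v₋`. -/

open Set

lemma hasDerivAt_Qf {γ x : ℝ} (hγ : γ ≠ 1) (hx : x ≠ 0) :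
    HasDerivAt (Qf γ) (-pres γ x) x := by
  refine ((Real.hasDerivAt_rpow_const (p := 1 - γ) (Or.inl hx)).div_const (γ - 1)).congr_deriv ?_
  rw [sub_sub_cancel_left, pres, div_eq_iff (sub_ne_zero.mpr hγ)]
  ring

lemma convexOn_Qf {γ : ℝ} (hγ₀ : 0 ≤ γ) (hγ₁ : γ ≠ 1) : ConvexOn ℝ (Ioi 0) (Qf γ) := by
  have hderiv : ∀ x ∈ Ioi (0 : ℝ), HasDerivAt (Qf γ) (-pres γ x) x := fun x hx =>
    hasDerivAt_Qf hγ₁ (ne_of_gt hx)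
  refine MonotoneOn.convexOn_of_deriv (convex_Ioi 0)
    (fun x hx => (hderiv x hx).continuousAt.continuousWithinAt) ?_ ?_
  · rw [interior_Ioi]
    exact fun x hx => (hderiv x hx).differentiableAt.differentiableWithinAt
  · rw [interior_Ioi]
    intro x hx y hy hxy
    rw [(hderiv x hx).deriv, (hderiv y hy).deriv, neg_le_neg_iff]
    exact Real.antitoneOn_rpow_Ioi_of_exponent_nonpos (neg_nonpos.mpr hγ₀) hx hy hxy

lemma Qrel_nonneg {γ v w : ℝ} (hγ₀ : 0 ≤ γ) (hγ₁ : γ ≠ 1) (hv : 0 < v) (hw : 0 < w) :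
    0 ≤ Qrel γ v w := by
  have hconv := convexOn_Qf hγ₀ hγ₁
  have hderiv := hasDerivAt_Qf hγ₁ hw.ne'
  rcases lt_trichotomy w v with hwv | rfl | hvw
  · have := hconv.le_slope_of_hasDerivAt hw hv hwv hderiv
    rw [slope_def_field, le_div_iff₀ (sub_pos.mpr hwv)] at this
    rw [Qrel]; linarith
  · simp [Qrel]
  · have := hconv.slope_le_of_hasDerivAt hv hw hvw hderiv
    rw [slope_def_field, div_le_iff₀ (sub_pos.mpr hvw)] at this
    rw [Qrel]; linarith

lemma Qrel_three_point (γ u v w : ℝ) :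
    Qrel γ v w = Qrel γ u w + Qrel γ v u + (pres γ w - pres γ u) * (v - u) := by
  unfold Qrel; ring

theorem stmt1 (γ vm : ℝ) (hγ : 1 < γ) (hvm : 0 < vm) :
    ∃ c₂ > (0 : ℝ), ∀ w : ℝ, 0 < w → w < vm → ∀ v : ℝ, 3 * vm ≤ v →
      c₂ * |v - w| ≤ Qrel γ v w := by
  have hγ₀ : 0 ≤ γ := by linarith
  have hγ₁ : γ ≠ 1 := hγ.ne'
  set K := pres γ vm - pres γ (2 * vm)
  have hK : 0 < K := sub_pos.mpr (Real.rpow_lt_rpow_of_neg hvm (by linarith) (by linarith))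
  refine ⟨K / 3, by positivity, fun w hw hwvm v hv => ?_⟩
  have hpres : K ≤ pres γ w - pres γ (2 * vm) := by
    have : pres γ vm ≤ pres γ w := Real.rpow_le_rpow_of_nonpos hw hwvm.le (by linarith)
    linarith
  have hQ_w : 0 ≤ Qrel γ (2 * vm) w := Qrel_nonneg hγ₀ hγ₁ (by linarith) hw
  have hQ_2vm : 0 ≤ Qrel γ v (2 * vm) := Qrel_nonneg hγ₀ hγ₁ (by linarith) (by linarith)
  rw [abs_of_pos (by linarith), Qrel_three_point γ (2 * vm)]
  calc K / 3 * (v - w) ≤ K * (v - 2 * vm) := by nlinarith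
    _ ≤ (pres γ w - pres γ (2 * vm)) * (v - 2 * vm) := by gcongr; linarith
    _ ≤ _ := by linarith
end

section
/- (Tail estimates for small viscous shocks.) Fix γ>1 and α>0 with α ≤ γ ≤ α+1, set β:=γ−α, and fix v₋>0 and u₋∈ℝ. There exist ε₀>0 and constants C, C₁, C₂>0 (depending only on γ, α, v₋) such that the following holds for every 0<ε<ε₀. Let v₊∈(0,v₋) be such that |p(v₋)−p(v₊)|=ε, let σ := −√( −(p(v₊)−p(v₋))/(v₊−v₋) ), and let u₊ := u₋ − σ(v₊−v₋). Suppose ṽ:ℝ→(0,∞) is twice continuously differentiable and h̃:ℝ→ℝ is continuously differentiable, and that for all ξ∈ℝ: −σ·ṽ'(ξ) − h̃'(ξ) = −( ṽ^β·(p∘ṽ)' )'(ξ) and −σ·h̃'(ξ) + (p∘ṽ)'(ξ) = 0, together with the limits ṽ(ξ)→v₋, h̃(ξ)→u₋ as ξ→−∞, ṽ(ξ)→v₊, h̃(ξ)→u₊ as ξ→+∞, ṽ'(ξ)→0 as ξ→±∞, and the normalization ṽ(0)=(v₋+v₊)/2. Then for all ξ∈ℝ: −C⁻¹·ε²·e^{−C₁·ε·|ξ|}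 ≤ ṽ'(ξ) ≤ −C·ε²·e^{−C₂·ε·|ξ|}; in particular, inf over ξ∈[−1/ε, 1/ε] of |ṽ'(ξ)| is at least C·ε². -/
open Real Set Filter Topology

theorem eq_of_hasDerivAt_zero_of_tendsto {E : Type*} [NormedAddCommGroup E] [NormedSpace ℝ E]
    {f : ℝ → E} {l : Filter ℝ} [l.NeBot] {L : E} (hf : ∀ x, HasDerivAt f 0 x)
    (hlim : Tendsto f l (𝓝 L)) (x : ℝ) : f x = L := by
  have hconst : ∀ y, f y = f x := fun y =>
    is_const_of_deriv_eq_zero (fun z => (hf z).differentiableAt) (fun z => (hf z).deriv) y x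
  exact tendsto_nhds_unique ((tendsto_congr hconst).2 tendsto_const_nhds) hlim

theorem eq_of_hasDerivAt_comp_of_eq {E : Type*} [NormedAddCommGroup E] [NormedSpace ℝ E]
    {Ψ : E → E} {f : ℝ → E} {e : E} (hΨ : ContDiffAt ℝ 1 Ψ e) (he : Ψ e = 0)
    (hf : ∀ t, HasDerivAt f (Ψ (f t)) t) {t₀ : ℝ} (ht₀ : f t₀ = e) (t : ℝ) : f t = e := by
  obtain ⟨K, s, hs, hK⟩ := hΨ.exists_lipschitzOnWith
  have hopen : IsOpen {t | f t = e} := by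
    refine isOpen_iff_mem_nhds.2 fun t₁ (ht₁ : f t₁ = e) => ?_
    have hnear : ∀ᶠ t in 𝓝 t₁, HasDerivAt f (Ψ (f t)) t ∧ f t ∈ s :=
      .and (.of_forall hf) ((hf t₁).continuousAt.preimage_mem_nhds (ht₁ ▸ hs))
    have hconst : ∀ᶠ t in 𝓝 t₁, HasDerivAt (fun _ => e) (Ψ e) t ∧ e ∈ s :=
      .of_forall fun t => ⟨he ▸ hasDerivAt_const t e, mem_of_mem_nhds hs⟩
    exact ODE_solution_unique_of_eventually (v := fun _ => Ψ) (s := fun _ => s)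
      (.of_forall fun _ => hK) hnear hconst ht₁
  have hclosed : IsClosed {t | f t = e} :=
    isClosed_eq (continuous_iff_continuousAt.2 fun t => (hf t).continuousAt) continuous_const
  have huniv := IsClopen.eq_univ ⟨hclosed, hopen⟩ ⟨t₀, ht₀⟩
  exact eq_univ_iff_forall.1 huniv t

theorem mem_Ioo_of_tendsto_of_ne {v : ℝ → ℝ} (hv : Continuous v) {a b : ℝ} (hab : a < b)
    (hbot : Tendsto v atBot (𝓝 b)) (htop : Tendsto v atTop (𝓝 a))
    (ha : ∀ t, v t ≠ a) (hb : ∀ t, v t ≠ b) (t : ℝ) : v t ∈ Ioo a b := by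
  have hrange := isPreconnected_range hv
  obtain ⟨t₁, ht₁⟩ := (hbot.eventually (Ioi_mem_nhds hab)).exists
  obtain ⟨t₂, ht₂⟩ := (htop.eventually (Iio_mem_nhds hab)).exists
  constructor
  · by_contra! h
    obtain ⟨s, hs⟩ := hrange.Icc_subset (mem_range_self t) (mem_range_self t₁) ⟨h, le_of_lt ht₁⟩
    exact ha s hs
  · by_contra! h
    obtain ⟨s, hs⟩ := hrange.Icc_subset (mem_range_self t₂) (mem_range_self t) ⟨le_of_lt ht₂, h⟩
    exact hb s hs

theorem abs_bounds_of_neg_deriv_bounds {w : ℝ → ℝ} {c₁ c₂ : ℝ} (hw : Differentiable ℝ w)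
    (h0 : w 0 = 0) (hc₁ : 0 ≤ c₁) (h : ∀ t, c₁ ≤ -deriv w t ∧ -deriv w t ≤ c₂) (t : ℝ) :
    c₁ * |t| ≤ |w t| ∧ |w t| ≤ c₂ * |t| := by
  have hderiv : ∀ t, deriv (fun s => -w s) t = -deriv w t := fun t => deriv.neg
  have hlow := mul_sub_le_image_sub_of_le_deriv hw.neg fun t => (hderiv t).symm ▸ (h t).1
  have hup := image_sub_le_mul_sub_of_deriv_le hw.neg fun t => (hderiv t).symm ▸ (h t).2
  rcases le_total 0 t with ht | ht
  · have h₁ := hlow ht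
    have h₂ := hup ht
    simp only [Pi.neg_apply, h0] at h₁ h₂
    rw [abs_of_nonneg ht, abs_of_nonpos (by nlinarith)]
    constructor <;> linarith
  · have h₁ := hlow ht
    have h₂ := hup ht
    simp only [Pi.neg_apply, h0] at h₁ h₂
    rw [abs_of_nonpos ht, abs_of_nonneg (by nlinarith)]
    constructor <;> linarith

noncomputable def logit (a b x : ℝ) : ℝ := log (x - a) - log (b - x)

theorem logit_midpoint (a b : ℝ) : logit a b ((a + b) / 2) = 0 := by
  rw [logit, sub_eq_zero]; ring_nf

theorem hasDerivAt_logit_comp {v : ℝ → ℝ} {a b v' t : ℝ} (hv : HasDerivAt v v' t)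
    (ht : v t ∈ Ioo a b) :
    HasDerivAt (fun s => logit a b (v s)) (v' * (b - a) / ((v t - a) * (b - v t))) t := by
  have ha : v t - a ≠ 0 := (sub_pos.2 ht.1).ne'
  have hb : b - v t ≠ 0 := (sub_pos.2 ht.2).ne'
  refine (((hv.sub_const a).log ha).sub (((hasDerivAt_const t b).sub hv).log hb)).congr_deriv ?_
  simp only [Pi.sub_apply]
  field_simp
  ring

theorem sub_mul_sub_mem_Icc_exp_logit {a b x : ℝ} (hx : x ∈ Ioo a b) :
    (b - a) ^ 2 / 4 * exp (-|logit a b x|) ≤ (x - a) * (b - x) ∧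
      (x - a) * (b - x) ≤ (b - a) ^ 2 * exp (-|logit a b x|) := by
  obtain ⟨hu, hr⟩ : 0 < x - a ∧ 0 < b - x := ⟨sub_pos.2 hx.1, sub_pos.2 hx.2⟩
  rw [show b - a = (x - a) + (b - x) by ring, logit]
  generalize x - a = u, b - x = r at hu hr ⊢
  rcases le_total r u with h | h
  · rw [abs_of_nonneg (sub_nonneg.2 (log_le_log hr h)), neg_sub, exp_sub, exp_log hu, exp_log hr]
    constructor
    · rw [div_mul_div_comm, div_le_iff₀ (by positivity)]
      nlinarith [mul_nonneg (mul_nonneg hr.le (sub_nonneg.2 h)) (by positivity : 0 ≤ 3 * u + r)]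
    · rw [mul_div, le_div_iff₀ hu]
      nlinarith [mul_pos (mul_pos hr hr) (by positivity : 0 < 2 * u + r)]
  · rw [abs_of_nonpos (sub_nonpos.2 (log_le_log hu h)), neg_neg, exp_sub, exp_log hu, exp_log hr]
    constructor
    · rw [div_mul_div_comm, div_le_iff₀ (by positivity)]
      nlinarith [mul_nonneg (mul_nonneg hu.le (sub_nonneg.2 h)) (by positivity : 0 ≤ 3 * r + u)]
    · rw [mul_div, le_div_iff₀ hr]
      nlinarith [mul_pos (mul_pos hu hu) (by positivity : 0 < 2 * r + u)]

theorem neg_deriv_bounds_of_logistic {v : ℝ → ℝ} {a b k₁ k₂ : ℝ} (hv : Differentiable ℝ v)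
    (hk₁ : 0 ≤ k₁) (hmem : ∀ t, v t ∈ Ioo a b) (h0 : v 0 = (a + b) / 2)
    (hbounds : ∀ t, k₁ * ((v t - a) * (b - v t)) ≤ -deriv v t ∧
      -deriv v t ≤ k₂ * ((v t - a) * (b - v t))) (t : ℝ) :
    k₁ * (b - a) ^ 2 / 4 * exp (-(k₂ * (b - a) * |t|)) ≤ -deriv v t ∧
      -deriv v t ≤ k₂ * (b - a) ^ 2 * exp (-(k₁ * (b - a) * |t|)) := by
  have hP : ∀ t, 0 < (v t - a) * (b - v t) := fun t =>
    mul_pos (sub_pos.2 (hmem t).1) (sub_pos.2 (hmem t).2)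
  have hab : 0 < b - a := by linarith [(hmem 0).1, (hmem 0).2]
  have hk₂ : 0 ≤ k₂ :=
    hk₁.trans (le_of_mul_le_mul_right ((hbounds 0).1.trans (hbounds 0).2) (hP 0))
  have hw : ∀ t, HasDerivAt (fun s => logit a b (v s))
      (deriv v t * (b - a) / ((v t - a) * (b - v t))) t := fun t =>
    hasDerivAt_logit_comp (hv t).hasDerivAt (hmem t)
  have hw' : ∀ t, k₁ * (b - a) ≤ -deriv (fun s => logit a b (v s)) t ∧
      -deriv (fun s => logit a b (v s)) t ≤ k₂ * (b - a) := by
    intro t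
    rw [(hw t).deriv, ← neg_div, le_div_iff₀ (hP t), div_le_iff₀ (hP t)]
    constructor <;> nlinarith [hbounds t]
  obtain ⟨hwl, hwu⟩ := abs_bounds_of_neg_deriv_bounds (fun t => (hw t).differentiableAt)
    (by simp only [h0, logit_midpoint]) (mul_nonneg hk₁ hab.le) hw' t
  obtain ⟨hPl, hPu⟩ := sub_mul_sub_mem_Icc_exp_logit (hmem t)
  constructor
  · calc k₁ * (b - a) ^ 2 / 4 * exp (-(k₂ * (b - a) * |t|))
        = k₁ * ((b - a) ^ 2 / 4 * exp (-(k₂ * (b - a) * |t|))) := by ring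
      _ ≤ k₁ * ((b - a) ^ 2 / 4 * exp (-|logit a b (v t)|)) := by gcongr
      _ ≤ k₁ * ((v t - a) * (b - v t)) := by gcongr
      _ ≤ -deriv v t := (hbounds t).1
  · calc -deriv v t ≤ k₂ * ((v t - a) * (b - v t)) := (hbounds t).2
      _ ≤ k₂ * ((b - a) ^ 2 * exp (-|logit a b (v t)|)) := by gcongr
      _ ≤ k₂ * (b - a) ^ 2 * exp (-(k₁ * (b - a) * |t|)) := by
          rw [← mul_assoc]; gcongr

theorem mul_le_of_deriv2_le_neg {f f' f'' : ℝ → ℝ} {a b m x : ℝ} (ha : f a = 0) (hb : f b = 0)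
    (hf : ∀ y ∈ Icc a b, HasDerivAt f (f' y) y) (hf' : ∀ y ∈ Icc a b, HasDerivAt f' (f'' y) y)
    (hm : ∀ y ∈ Icc a b, f'' y ≤ -m) (hx : x ∈ Icc a b) :
    m / 2 * ((x - a) * (b - x)) ≤ f x := by
  have hab : a ≤ b := hx.1.trans hx.2
  have hq : ∀ y, HasDerivAt (fun y => m / 2 * ((y - a) * (b - y))) (m / 2 * (a + b - 2 * y)) y :=
    fun y => (((hasDerivAt_id y).sub_const a).mul ((hasDerivAt_const y b).sub (hasDerivAt_id y))
      |>.const_mul (m / 2)).congr_deriv (by simp only [id, Pi.sub_apply]; ring)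
  have hq' : ∀ y, HasDerivAt (fun y => m / 2 * (a + b - 2 * y)) (-m) y :=
    fun y => (((hasDerivAt_id y).const_mul 2).const_sub (a + b) |>.const_mul (m / 2)).congr_deriv
      (by ring)
  have hconc : ConcaveOn ℝ (Icc a b) fun y => f y - m / 2 * ((y - a) * (b - y)) := by
    refine concaveOn_of_hasDerivWithinAt2_nonpos (convex_Icc a b)
      (f' := fun y => f' y - m / 2 * (a + b - 2 * y)) (f'' := fun y => f'' y - -m)
      (fun y hy => ((hf y hy).sub (hq y)).continuousAt.continuousWithinAt) (fun y hy => ?_)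
      (fun y hy => ?_) (fun y hy => ?_) <;> rw [interior_Icc] at hy
    · exact ((hf y (Ioo_subset_Icc_self hy)).sub (hq y)).hasDerivWithinAt
    · exact ((hf' y (Ioo_subset_Icc_self hy)).sub (hq' y)).hasDerivWithinAt
    · linarith [hm y (Ioo_subset_Icc_self hy)]
  have := hconc.ge_on_segment (left_mem_Icc.2 hab) (right_mem_Icc.2 hab)
    ((segment_eq_Icc hab).symm ▸ hx)
  simp only [ha, hb, sub_self, mul_zero, zero_mul, min_self] at this
  linarith

theorem le_mul_of_neg_le_deriv2 {f f' f'' : ℝ → ℝ} {a b M x : ℝ} (ha : f a = 0) (hb : f b = 0)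
    (hf : ∀ y ∈ Icc a b, HasDerivAt f (f' y) y) (hf' : ∀ y ∈ Icc a b, HasDerivAt f' (f'' y) y)
    (hM : ∀ y ∈ Icc a b, -M ≤ f'' y) (hx : x ∈ Icc a b) :
    f x ≤ M / 2 * ((x - a) * (b - x)) := by
  have := mul_le_of_deriv2_le_neg (f := -f) (f' := -f') (f'' := -f'') (m := -M)
    (by simp [ha]) (by simp [hb]) (fun y hy => (hf y hy).neg) (fun y hy => (hf' y hy).neg)
    (fun y hy => by simp only [Pi.neg_apply, neg_neg]; exact neg_le.1 (hM y hy)) hx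
  simp only [Pi.neg_apply] at this
  linarith

theorem hasDerivAt_pres (γ : ℝ) {x : ℝ} (hx : 0 < x) :
    HasDerivAt (pres γ) (-γ * x ^ (-γ - 1)) x :=
  hasDerivAt_rpow_const (Or.inl hx.ne')

theorem pres_strictAntiOn {γ : ℝ} (hγ : 0 < γ) : StrictAntiOn (pres γ) (Ioi 0) :=
  fun _ hx _ _ hxy => rpow_lt_rpow_of_neg hx hxy (neg_neg_of_pos hγ)

theorem slope_pres_mem_Icc {γ a x y b : ℝ} (hγ : 0 < γ) (ha : 0 < a) (hax : a ≤ x) (hxy : x < y)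
    (hyb : y ≤ b) :
    (pres γ x - pres γ y) / (y - x) ∈ Icc (γ * b ^ (-γ - 1)) (γ * a ^ (-γ - 1)) := by
  have hx : 0 < x := ha.trans_le hax
  obtain ⟨c, hc, hslope⟩ := exists_hasDerivAt_eq_slope (pres γ) (fun c => -γ * c ^ (-γ - 1)) hxy
    (fun c hc => (hasDerivAt_pres γ (hx.trans_le hc.1)).continuousAt.continuousWithinAt)
    (fun c hc => hasDerivAt_pres γ (hx.trans hc.1))
  have hc0 : 0 < c := hx.trans hc.1
  rw [show (pres γ x - pres γ y) / (y - x) = -((pres γ y - pres γ x) / (y - x)) by ring,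
    ← hslope, neg_mul, neg_neg]
  exact ⟨mul_le_mul_of_nonneg_left (rpow_le_rpow_of_nonpos hc0 (hc.2.le.trans hyb) (by linarith))
      hγ.le,
    mul_le_mul_of_nonneg_left (rpow_le_rpow_of_nonpos ha (hax.trans hc.1.le) (by linarith)) hγ.le⟩

theorem small_shock_width {γ vm vp ε : ℝ} (hγ : 0 < γ) (hvp : 0 < vp) (hlt : vp < vm)
    (hε : |pres γ vm - pres γ vp| = ε) (hε₀ : ε < pres γ (vm / 2) - pres γ vm) :
    vm / 2 < vp ∧ ε / (γ * (vm / 2) ^ (-γ - 1)) ≤ vm - vp ∧ vm - vp ≤ ε / (γ * vm ^ (-γ - 1)) := by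
  have hvm : 0 < vm := hvp.trans hlt
  have hvm2 : 0 < vm / 2 := half_pos hvm
  have hjump : pres γ vp - pres γ vm = ε := by
    rw [← hε, abs_sub_comm, abs_of_pos (sub_pos.2 (pres_strictAntiOn hγ hvp hvm hlt))]
  have hvp2 : vm / 2 < vp := ((pres_strictAntiOn hγ).lt_iff_gt hvp hvm2).1 (by linarith)
  obtain ⟨hl, hu⟩ := hjump ▸ slope_pres_mem_Icc hγ hvm2 hvp2.le hlt le_rfl
  rw [le_div_iff₀ (sub_pos.2 hlt)] at hl
  rw [div_le_iff₀ (sub_pos.2 hlt)] at hu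
  exact ⟨hvp2, (div_le_iff₀ (by positivity)).2 (by linarith),
    (le_div_iff₀ (by positivity)).2 (by linarith)⟩

theorem shock_speed_spec {γ vp vm σ : ℝ} (hγ : 0 < γ) (hvp : 0 < vp) (hlt : vp < vm)
    (hσ : σ = -√(-((pres γ vp - pres γ vm) / (vp - vm)))) :
    σ < 0 ∧ σ ^ 2 * (vm - vp) = pres γ vp - pres γ vm := by
  have hpos : 0 < (pres γ vp - pres γ vm) / (vm - vp) :=
    div_pos (sub_pos.2 (pres_strictAntiOn hγ hvp (hvp.trans hlt) hlt)) (sub_pos.2 hlt)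
  rw [← div_neg, neg_sub] at hσ
  subst hσ
  refine ⟨neg_neg_of_pos (sqrt_pos.2 hpos), ?_⟩
  rw [neg_sq, sq_sqrt hpos.le, div_mul_cancel₀ _ (sub_pos.2 hlt).ne']

noncomputable def chordGap (γ q vm x : ℝ) : ℝ := pres γ vm - q * (x - vm) - pres γ x

theorem chordGap_bounds {γ q vp vm x : ℝ} (hγ : 0 < γ) (hvp : 0 < vp)
    (hq : q * (vm - vp) = pres γ vp - pres γ vm) (hx : x ∈ Icc vp vm) :
    γ * (γ + 1) * vm ^ (-γ - 2) / 2 * ((x - vp) * (vm - x)) ≤ chordGap γ q vm x ∧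
      chordGap γ q vm x ≤ γ * (γ + 1) * vp ^ (-γ - 2) / 2 * ((x - vp) * (vm - x)) := by
  have hpos : ∀ y ∈ Icc vp vm, 0 < y := fun y hy => hvp.trans_le hy.1
  have hf : ∀ y ∈ Icc vp vm, HasDerivAt (chordGap γ q vm) (γ * y ^ (-γ - 1) - q) y :=
    fun y hy => (((hasDerivAt_id y).sub_const vm).const_mul q |>.const_sub (pres γ vm)
      |>.sub (hasDerivAt_pres γ (hpos y hy))).congr_deriv (by ring)
  have hf' : ∀ y ∈ Icc vp vm, HasDerivAt (fun y => γ * y ^ (-γ - 1) - q)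
      (-(γ * (γ + 1) * y ^ (-γ - 2))) y := fun y hy =>
    ((hasDerivAt_rpow_const (Or.inl (hpos y hy).ne')).const_mul γ |>.sub_const q).congr_deriv
      (by rw [show -γ - 1 - 1 = -γ - 2 by ring]; ring)
  have hvm : chordGap γ q vm vm = 0 := by simp [chordGap]
  have hvp' : chordGap γ q vm vp = 0 := by unfold chordGap; linear_combination hq
  constructor
  · refine mul_le_of_deriv2_le_neg hvp' hvm hf hf' (fun y hy => ?_) hx
    exact neg_le_neg (mul_le_mul_of_nonneg_left (rpow_le_rpow_of_nonpos (hpos y hy) hy.2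
      (by linarith)) (by positivity))
  · refine le_mul_of_neg_le_deriv2 hvp' hvm hf hf' (fun y hy => ?_) hx
    exact neg_le_neg (mul_le_mul_of_nonneg_left (rpow_le_rpow_of_nonpos hvp hy.1
      (by linarith)) (by positivity))

theorem deriv_eq_chordGap {γ α σ vm um : ℝ} {vt ht : ℝ → ℝ} (hγ : γ ≠ 0) (hσ : σ ≠ 0)
    (hvm : 0 < vm) (hvt : ContDiff ℝ 2 vt) (hht : Differentiable ℝ ht) (hpos : ∀ ξ, 0 < vt ξ)
    (hmass : ∀ ξ, -σ * deriv vt ξ - deriv ht ξ =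
      -deriv (fun x => vt x ^ (γ - α) * deriv (fun y => pres γ (vt y)) x) ξ)
    (hmomentum : ∀ ξ, -σ * deriv ht ξ + deriv (fun y => pres γ (vt y)) ξ = 0)
    (hvb : Tendsto vt atBot (𝓝 vm)) (hhb : Tendsto ht atBot (𝓝 um))
    (hdb : Tendsto (deriv vt) atBot (𝓝 0)) (ξ : ℝ) :
    deriv vt ξ = vt ξ ^ (α + 1) * chordGap γ (σ ^ 2) vm (vt ξ) / (γ * σ) := by
  have hvd : Differentiable ℝ vt := hvt.differentiable two_ne_zero
  have hvd' : Differentiable ℝ (deriv vt) := hvt.differentiable_deriv_two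
  have hrpow : ∀ r : ℝ, Tendsto (fun ξ => vt ξ ^ r) atBot (𝓝 (vm ^ r)) := fun r =>
    (continuousAt_rpow_const vm r (Or.inl hvm.ne')).tendsto.comp hvb
  have hp : ∀ ξ, HasDerivAt (fun y => pres γ (vt y)) (-γ * vt ξ ^ (-γ - 1) * deriv vt ξ) ξ :=
    fun ξ => (hasDerivAt_pres γ (hpos ξ)).comp ξ (hvd ξ).hasDerivAt
  set W : ℝ → ℝ := fun ξ => -γ * vt ξ ^ (-α - 1) * deriv vt ξ with hW
  have hflux : (fun x => vt x ^ (γ - α) * deriv (fun y => pres γ (vt y)) x) = W := by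
    funext x
    rw [(hp x).deriv, hW, ← mul_assoc, mul_left_comm, ← rpow_add (hpos x)]
    ring_nf
  have hmomentum_int : ∀ ξ, -σ * ht ξ + pres γ (vt ξ) = -σ * um + pres γ vm := by
    refine eq_of_hasDerivAt_zero_of_tendsto (fun ξ => ?_) ((hhb.const_mul _).add (hrpow (-γ)))
    have := ((hht ξ).hasDerivAt.const_mul (-σ)).add (hp ξ)
    rwa [← (hp ξ).deriv, hmomentum] at this
  have hmass_int : ∀ ξ, -σ * vt ξ - ht ξ + W ξ = -σ * vm - um := by
    have hWd : ∀ ξ, HasDerivAt W (deriv W ξ) ξ := fun ξ =>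
      (((hasDerivAt_rpow_const (Or.inl (hpos ξ).ne')).comp ξ (hvd ξ).hasDerivAt |>.const_mul (-γ)
        |>.differentiableAt).mul (hvd' ξ)).hasDerivAt
    have hlim := ((hvb.const_mul (-σ)).sub hhb).add (((hrpow (-α - 1)).const_mul (-γ)).mul hdb)
    rw [mul_zero, add_zero] at hlim
    refine eq_of_hasDerivAt_zero_of_tendsto (fun ξ => ?_) hlim
    have hsum := (((hvd ξ).hasDerivAt.const_mul (-σ)).sub (hht ξ).hasDerivAt).add (hWd ξ)
    have hbal := hmass ξ
    rw [hflux] at hbal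
    rwa [hbal, neg_add_cancel] at hsum
  have hgap : γ * σ * (vt ξ ^ (-α - 1) * deriv vt ξ) = chordGap γ (σ ^ 2) vm (vt ξ) := by
    have h1 := hmomentum_int ξ
    have h2 := hmass_int ξ
    simp only [hW] at h2
    unfold chordGap
    linear_combination (-σ) * h2 + h1
  have hinv : vt ξ ^ (α + 1) * vt ξ ^ (-α - 1) = 1 := by
    rw [← rpow_add (hpos ξ), show α + 1 + (-α - 1) = 0 by ring, rpow_zero]
  rw [eq_div_iff (mul_ne_zero hγ hσ), ← hgap]
  linear_combination (-(γ * σ * deriv vt ξ)) * hinv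

theorem mem_Ioo_of_deriv_eq_chordGap {γ α σ vp vm : ℝ} {vt : ℝ → ℝ} (hvp : 0 < vp) (hlt : vp < vm)
    (hσ : σ ^ 2 * (vm - vp) = pres γ vp - pres γ vm) (hvd : Differentiable ℝ vt)
    (hode : ∀ ξ, deriv vt ξ = vt ξ ^ (α + 1) * chordGap γ (σ ^ 2) vm (vt ξ) / (γ * σ))
    (hvb : Tendsto vt atBot (𝓝 vm)) (hva : Tendsto vt atTop (𝓝 vp)) (ξ : ℝ) :
    vt ξ ∈ Ioo vp vm := by
  set Ψ : ℝ → ℝ := fun x => x ^ (α + 1) * chordGap γ (σ ^ 2) vm x / (γ * σ)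
  have hf : ∀ t, HasDerivAt vt (Ψ (vt t)) t := fun t => (hvd t).hasDerivAt.congr_deriv (hode t)
  have hΨ : ∀ e, 0 < e → ContDiffAt ℝ 1 Ψ e := fun e he => by
    unfold Ψ chordGap pres
    fun_prop (disch := exact he.ne')
  have hgap_vm : chordGap γ (σ ^ 2) vm vm = 0 := by simp [chordGap]
  have hgap_vp : chordGap γ (σ ^ 2) vm vp = 0 := by unfold chordGap; linear_combination hσ
  refine mem_Ioo_of_tendsto_of_ne hvd.continuous hlt hvb hva (fun t h => ?_) (fun t h => ?_) ξ
  · have hconst := funext (eq_of_hasDerivAt_comp_of_eq (hΨ vp hvp) (by simp [Ψ, hgap_vp]) hf h)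
    rw [hconst] at hvb
    exact hlt.ne (tendsto_nhds_unique tendsto_const_nhds hvb)
  · have hconst := funext (eq_of_hasDerivAt_comp_of_eq (hΨ vm (hvp.trans hlt))
      (by simp [Ψ, hgap_vm]) hf h)
    rw [hconst] at hva
    exact hlt.ne (tendsto_nhds_unique hva tendsto_const_nhds)

theorem exists_bounds_neg_chordGap_field {γ α vm : ℝ} (hγ : 0 < γ) (hα : -1 ≤ α) (hvm : 0 < vm) :
    ∃ k₁ > 0, ∃ k₂ > 0, ∀ vp σ x, vm / 2 ≤ vp → vp < vm → σ < 0 →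
      σ ^ 2 * (vm - vp) = pres γ vp - pres γ vm → x ∈ Icc vp vm →
      k₁ * ((x - vp) * (vm - x)) ≤ -(x ^ (α + 1) * chordGap γ (σ ^ 2) vm x / (γ * σ)) ∧
        -(x ^ (α + 1) * chordGap γ (σ ^ 2) vm x / (γ * σ)) ≤ k₂ * ((x - vp) * (vm - x)) := by
  have hvm2 : 0 < vm / 2 := half_pos hvm
  -- `k₁`, `k₂` combine `(v₋/2)^(α+1) ≤ x^(α+1) ≤ v₋^(α+1)`, `p''(v₋) ≤ p'' ≤ p''(v₋/2)` and
  -- `√(-p'(v₋)) ≤ -σ ≤ √(-p'(v₋/2))`.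
  refine ⟨(vm / 2) ^ (α + 1) * (γ * (γ + 1) * vm ^ (-γ - 2) / 2) /
      (γ * √(γ * (vm / 2) ^ (-γ - 1))), by positivity,
    vm ^ (α + 1) * (γ * (γ + 1) * (vm / 2) ^ (-γ - 2) / 2) / (γ * √(γ * vm ^ (-γ - 1))),
      by positivity, fun vp σ x hvp hlt hσ hσ2 hx => ?_⟩
  have hvp0 : 0 < vp := hvm2.trans_le hvp
  have hx0 : 0 < x := hvp0.trans_le hx.1
  have hP : 0 ≤ (x - vp) * (vm - x) := mul_nonneg (sub_nonneg.2 hx.1) (sub_nonneg.2 hx.2)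
  have hslope := slope_pres_mem_Icc hγ hvm2 hvp hlt le_rfl
  rw [← hσ2, mul_div_cancel_right₀ _ (sub_pos.2 hlt).ne'] at hslope
  have habs : √(σ ^ 2) = -σ := by rw [sqrt_sq_eq_abs, abs_of_neg hσ]
  have hσl : √(γ * vm ^ (-γ - 1)) ≤ -σ := habs ▸ sqrt_le_sqrt hslope.1
  have hσu : -σ ≤ √(γ * (vm / 2) ^ (-γ - 1)) := habs ▸ sqrt_le_sqrt hslope.2
  obtain ⟨hgl, hgu⟩ := chordGap_bounds hγ hvp0 hσ2 hx
  have hgu' : chordGap γ (σ ^ 2) vm x ≤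
      γ * (γ + 1) * (vm / 2) ^ (-γ - 2) / 2 * ((x - vp) * (vm - x)) :=
    hgu.trans (by gcongr _ * _ * ?_ / 2 * _; exact rpow_le_rpow_of_nonpos hvm2 hvp (by linarith))
  have hxl : (vm / 2) ^ (α + 1) ≤ x ^ (α + 1) := rpow_le_rpow hvm2.le (hvp.trans hx.1) (by linarith)
  have hxu : x ^ (α + 1) ≤ vm ^ (α + 1) := rpow_le_rpow hx0.le hx.2 (by linarith)
  have hg0 : 0 ≤ chordGap γ (σ ^ 2) vm x := (mul_nonneg (by positivity) hP).trans hgl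
  have hγσ : 0 < γ * -σ := mul_pos hγ (neg_pos.2 hσ)
  rw [← div_neg, ← mul_neg]
  constructor
  · rw [← mul_div_right_comm, mul_assoc]
    gcongr
  · rw [← mul_div_right_comm, mul_assoc]
    gcongr

theorem neg_bounds_of_width_bounds {f : ℝ → ℝ} {ε δ k₁ k₂ m M : ℝ} (hk₁ : 0 ≤ k₁) (hk₂ : 0 ≤ k₂)
    (hM : 0 < M) (hε : 0 ≤ ε) (hδl : ε / M ≤ δ) (hδu : δ ≤ ε / m)
    (h : ∀ ξ, k₁ * δ ^ 2 / 4 * exp (-(k₂ * δ * |ξ|)) ≤ -f ξ ∧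
      -f ξ ≤ k₂ * δ ^ 2 * exp (-(k₁ * δ * |ξ|))) (ξ : ℝ) :
    k₁ / (4 * M ^ 2) * ε ^ 2 * exp (-(k₂ / m) * ε * |ξ|) ≤ -f ξ ∧
      -f ξ ≤ k₂ / m ^ 2 * ε ^ 2 * exp (-(k₁ / M) * ε * |ξ|) := by
  have hεM : 0 ≤ ε / M := by positivity
  constructor
  · calc k₁ / (4 * M ^ 2) * ε ^ 2 * exp (-(k₂ / m) * ε * |ξ|)
        = k₁ * (ε / M) ^ 2 / 4 * exp (-(k₂ * (ε / m) * |ξ|)) := by ring_nf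
      _ ≤ k₁ * δ ^ 2 / 4 * exp (-(k₂ * δ * |ξ|)) := by gcongr
      _ ≤ -f ξ := (h ξ).1
  · calc -f ξ ≤ k₂ * δ ^ 2 * exp (-(k₁ * δ * |ξ|)) := (h ξ).2
      _ ≤ k₂ * (ε / m) ^ 2 * exp (-(k₁ * (ε / M) * |ξ|)) := by gcongr; linarith
      _ = k₂ / m ^ 2 * ε ^ 2 * exp (-(k₁ / M) * ε * |ξ|) := by ring_nf

theorem tail_estimates_of_neg_bounds {f : ℝ → ℝ} {ε A B C C₁ C₂ : ℝ} (hε : 0 < ε) (hA : 0 ≤ A)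
    (hC₂ : 0 ≤ C₂) (hCA : C ≤ A * exp (-C₂)) (hBC : B ≤ C⁻¹)
    (h : ∀ ξ, A * ε ^ 2 * exp (-C₂ * ε * |ξ|) ≤ -f ξ ∧ -f ξ ≤ B * ε ^ 2 * exp (-C₁ * ε * |ξ|)) :
    (∀ ξ, -C⁻¹ * ε ^ 2 * exp (-C₁ * ε * |ξ|) ≤ f ξ ∧ f ξ ≤ -C * ε ^ 2 * exp (-C₂ * ε * |ξ|)) ∧
      ∀ ξ ∈ Icc (-(1 / ε)) (1 / ε), C * ε ^ 2 ≤ |f ξ| := by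
  have hCA' : C ≤ A := hCA.trans (mul_le_of_le_one_right hA (exp_le_one_iff.2 (by linarith)))
  refine ⟨fun ξ => ⟨?_, ?_⟩, fun ξ hξ => ?_⟩
  · have : B * ε ^ 2 * exp (-C₁ * ε * |ξ|) ≤ C⁻¹ * ε ^ 2 * exp (-C₁ * ε * |ξ|) := by gcongr
    linarith [(h ξ).2]
  · have : C * ε ^ 2 * exp (-C₂ * ε * |ξ|) ≤ A * ε ^ 2 * exp (-C₂ * ε * |ξ|) := by gcongr
    linarith [(h ξ).1]
  · have hεξ : ε * |ξ| ≤ 1 := by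
      rw [← le_div_iff₀' hε]
      exact abs_le.2 ⟨by linarith [hξ.1], hξ.2⟩
    calc C * ε ^ 2 ≤ A * exp (-C₂) * ε ^ 2 := by gcongr
      _ ≤ A * ε ^ 2 * exp (-C₂ * ε * |ξ|) := by
          rw [mul_right_comm]; gcongr; nlinarith
      _ ≤ -f ξ := (h ξ).1
      _ ≤ |f ξ| := neg_le_abs _

theorem stmt11_general (γ α vm um : ℝ) (hγ : 1 < γ) (hα : 0 < α)
    (hvm : 0 < vm) :
    ∃ ε₀ > (0 : ℝ), ∃ C > (0 : ℝ), ∃ C₁ > (0 : ℝ), ∃ C₂ > (0 : ℝ),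
      ∀ ε : ℝ, 0 < ε → ε < ε₀ →
      ∀ vp : ℝ, 0 < vp → vp < vm → |pres γ vm - pres γ vp| = ε →
      ∀ σ up : ℝ,
      σ = -Real.sqrt (-((pres γ vp - pres γ vm) / (vp - vm))) →
      up = um - σ * (vp - vm) →
      ∀ vt ht : ℝ → ℝ,
      ContDiff ℝ 2 vt → ContDiff ℝ 1 ht →
      (∀ ξ, 0 < vt ξ) →
      (∀ ξ, -σ * deriv vt ξ - deriv ht ξ =
        -deriv (fun x => (vt x) ^ (γ - α) * deriv (fun y => pres γ (vt y)) x) ξ) →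
      (∀ ξ, -σ * deriv ht ξ + deriv (fun y => pres γ (vt y)) ξ = 0) →
      Filter.Tendsto vt Filter.atBot (nhds vm) →
      Filter.Tendsto ht Filter.atBot (nhds um) →
      Filter.Tendsto vt Filter.atTop (nhds vp) →
      Filter.Tendsto ht Filter.atTop (nhds up) →
      Filter.Tendsto (deriv vt) Filter.atBot (nhds 0) →
      Filter.Tendsto (deriv vt) Filter.atTop (nhds 0) →
      vt 0 = (vm + vp) / 2 →
      (∀ ξ : ℝ, -C⁻¹ * ε ^ 2 * Real.exp (-C₁ * ε * |ξ|) ≤ deriv vt ξ ∧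
            deriv vt ξ ≤ -C * ε ^ 2 * Real.exp (-C₂ * ε * |ξ|)) ∧
      (∀ ξ ∈ Set.Icc (-(1 / ε)) (1 / ε), C * ε ^ 2 ≤ |deriv vt ξ|) := by
  have hγ0 : 0 < γ := by linarith
  have hvm2 : 0 < vm / 2 := half_pos hvm
  obtain ⟨k₁, hk₁, k₂, hk₂, hk⟩ := exists_bounds_neg_chordGap_field hγ0 (by linarith : -1 ≤ α) hvm
  set m := γ * vm ^ (-γ - 1)
  set M := γ * (vm / 2) ^ (-γ - 1)
  have hm : 0 < m := by positivity
  have hM : 0 < M := by positivity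
  have hC : 0 < min (k₁ / (4 * M ^ 2) * exp (-(k₂ / m))) (k₂ / m ^ 2)⁻¹ := by positivity
  refine ⟨pres γ (vm / 2) - pres γ vm,
    sub_pos.2 (pres_strictAntiOn hγ0 hvm2 hvm (half_lt_self hvm)), _, hC, k₁ / M, by positivity,
    k₂ / m, by positivity, ?_⟩
  intro ε hε hε₀ vp hvp hvpm hεp σ up hσ _ vt ht hvt hht hpos hmass hmomentum hvb hhb hva _ hdb _
    hmid
  obtain ⟨hvp2, hwl, hwu⟩ := small_shock_width hγ0 hvp hvpm hεp hε₀
  obtain ⟨hσ0, hσ2⟩ := shock_speed_spec hγ0 hvp hvpm hσ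
  have hvd : Differentiable ℝ vt := hvt.differentiable two_ne_zero
  have hode := deriv_eq_chordGap hγ0.ne' hσ0.ne (hvp.trans hvpm) hvt
    (hht.differentiable one_ne_zero) hpos hmass hmomentum hvb hhb hdb
  have hmem := mem_Ioo_of_deriv_eq_chordGap hvp hvpm hσ2 hvd hode hvb hva
  have hlogistic := neg_deriv_bounds_of_logistic hvd hk₁.le hmem (by rw [hmid, add_comm])
    fun ξ => by
      rw [hode ξ]
      exact hk vp σ (vt ξ) hvp2.le hvpm hσ0 hσ2 (Ioo_subset_Icc_self (hmem ξ))
  exact tail_estimates_of_neg_bounds hε (by positivity) (by positivity) (min_le_left _ _)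
    ((le_inv_comm₀ hC (by positivity)).1 (min_le_right _ _))
    (neg_bounds_of_width_bounds hk₁.le hk₂.le hM hε.le hwl hwu hlogistic)

/-- Tail estimates for small viscous shocks of the transformed Navier-Stokes system. -/
theorem stmt11 (γ α vm um : ℝ) (hγ : 1 < γ) (hα : 0 < α) (hαγ : α ≤ γ) (hγα : γ ≤ α + 1)
    (hvm : 0 < vm) :
    ∃ ε₀ > (0 : ℝ), ∃ C > (0 : ℝ), ∃ C₁ > (0 : ℝ), ∃ C₂ > (0 : ℝ),
      ∀ ε : ℝ, 0 < ε → ε < ε₀ →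
      ∀ vp : ℝ, 0 < vp → vp < vm → |pres γ vm - pres γ vp| = ε →
      ∀ σ up : ℝ,
      σ = -Real.sqrt (-((pres γ vp - pres γ vm) / (vp - vm))) →
      up = um - σ * (vp - vm) →
      ∀ vt ht : ℝ → ℝ,
      ContDiff ℝ 2 vt → ContDiff ℝ 1 ht →
      (∀ ξ, 0 < vt ξ) →
      (∀ ξ, -σ * deriv vt ξ - deriv ht ξ =
        -deriv (fun x => (vt x) ^ (γ - α) * deriv (fun y => pres γ (vt y)) x) ξ) →
      (∀ ξ, -σ * deriv ht ξ + deriv (fun y => pres γ (vt y)) ξ = 0) →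
      Filter.Tendsto vt Filter.atBot (nhds vm) →
      Filter.Tendsto ht Filter.atBot (nhds um) →
      Filter.Tendsto vt Filter.atTop (nhds vp) →
      Filter.Tendsto ht Filter.atTop (nhds up) →
      Filter.Tendsto (deriv vt) Filter.atBot (nhds 0) →
      Filter.Tendsto (deriv vt) Filter.atTop (nhds 0) →
      vt 0 = (vm + vp) / 2 →
      (∀ ξ : ℝ, -C⁻¹ * ε ^ 2 * Real.exp (-C₁ * ε * |ξ|) ≤ deriv vt ξ ∧
            deriv vt ξ ≤ -C * ε ^ 2 * Real.exp (-C₂ * ε * |ξ|)) ∧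
      (∀ ξ ∈ Set.Icc (-(1 / ε)) (1 / ε), C * ε ^ 2 ≤ |deriv vt ξ|) :=
  stmt11_general γ α vm um hγ hα hvm
end

section
/- (Weak lower semicontinuity of the relative entropy with respect to a moving step function.) Let γ>1, T>0, and 0<v₊<v₋. Let X:(0,T)→ℝ be a function of bounded variation, let Ω := { (t,x) ∈ (0,T)×ℝ : x < X(t) }, and assume the topological boundary of Ω has zero two-dimensional Lebesgue measure. Define v̄(t,x):=v₋ for (t,x)∈Ω and v̄(t,x):=v₊ otherwise, and define V̄(t,x):=v₋ for (t,x) in the closure of Ω and V̄(t,x):=v₊ otherwise. Let Φ:(0,T)×ℝ→[0,∞) be continuous with compact support, and let C₀>0. Suppose (vᵏ) is a sequence of nonnegative Radon measures on (0,T)×ℝ with Lebesgue decompositions dvᵏ = vᵏₐ(t,x) dt dx + dvᵏₛ (vᵏₐ the density of the absolutely continuous part, vᵏₛ the singular part) satisfying, for every k, ∫∫ Φ(t,x)·Q( vᵏₐ(t,x) | v̄(t,x) ) dt dx + ∫ Φ(t,x)·p(V̄(t,x)) dvᵏₛ(t,x) ≤ C₀, and suppose vᵏ converges to a nonnegative Radon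 measure v∞ in the local weak-* sense, i.e. ∫ ψ dvᵏ → ∫ ψ dv∞ for every continuous compactly supported ψ:(0,T)×ℝ→ℝ. Then, writing dv∞ = vₐ dt dx + dvₛ for the Lebesgue decomposition of v∞, one has ∫∫ Φ(t,x)·Q( vₐ(t,x) | v̄(t,x) ) dt dx + ∫ Φ(t,x)·p(V̄(t,x)) dvₛ(t,x) ≤ C₀. -/
open MeasureTheory Classical

/-- Extended-real-valued relative functional: `Q(0|w)` (and `Q(∞|w)`) is `+∞`. -/
noncomputable def QrelE (γ : ℝ) (v : ENNReal) (w : ℝ) : ENNReal :=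
  if v = 0 ∨ v = ⊤ then ⊤ else ENNReal.ofReal (Qrel γ v.toReal w)

/-!
The left-hand side is the supremum, over continuous compactly supported pairs `(ψ, b)` with
`ψ t + b ≤ Φ Q(t|v̄)` for `t > 0` and `ψ ≤ Φ p(V̄)`, of the weak-* continuous maps
`μ ↦ ∫ ψ dμ + ∫ b dx`, and a supremum of continuous maps is lower semicontinuous.

For this duality one needs countably many such pairs whose pointwise supremum recovers
`Φ Q(·|v̄)` off the null set `∂Ω` and `Φ p(V̄)` everywhere: tangent lines of the convex functions
`Q(·|v±)`, cut off near `∂Ω`. As `v₊ < v₋`, the recession slope `p(v₋)` of `Q(·|v₋)` is the smaller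
one, so the slopes `p(v₋) - p(u)` are admissible on both sides of `∂Ω`, where the singular part may
live. The integral of the supremum of finitely many pairs is then approached by a single pair:
two pairs are glued by a continuous `χ` with values in `[0, 1]` that agrees with the indicator of
the set where the first one is larger, except on a set of small `(dx + μˢ)`-measure (regularity
and Urysohn's lemma).
-/

open Set Filter Topology Metric
open scoped ENNReal NNReal

section ApproxDominated

variable {α : Type*} [MeasurableSpace α] {ν : Measure α} {S : Set (α → ℝ)}

lemma ofReal_integral_le_lintegral_ofReal {f : α → ℝ} (hf : Integrable f ν) :
    ENNReal.ofReal (∫ q, f q ∂ν) ≤ ∫⁻ q, ENNReal.ofReal (f q) ∂ν := by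
  rw [integral_eq_lintegral_pos_part_sub_lintegral_neg_part hf]
  exact (ENNReal.ofReal_le_ofReal (sub_le_self _ ENNReal.toReal_nonneg)).trans
    ENNReal.ofReal_toReal_le

def ApproxDominated (ν : Measure α) (S : Set (α → ℝ)) (f : α → ℝ) : Prop :=
  ∀ ε : ℝ≥0∞, 0 < ε → ∃ h ∈ S, ∫⁻ q, ENNReal.ofReal (f q - h q) ∂ν ≤ ε

lemma approxDominated_of_mem {h : α → ℝ} (hh : h ∈ S) : ApproxDominated ν S h :=
  fun _ _ => ⟨h, hh, by simp⟩

lemma ApproxDominated.sup (hS : ∀ h ∈ S, AEMeasurable h ν)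
    (hmix : ∀ h₁ ∈ S, ∀ h₂ ∈ S, ApproxDominated ν S (h₁ ⊔ h₂))
    {f k : α → ℝ} (hf : ApproxDominated ν S f) (hk : k ∈ S) : ApproxDominated ν S (f ⊔ k) := by
  intro ε hε
  obtain ⟨h, hhS, hfh⟩ := hf (ε / 2) (ENNReal.half_pos hε.ne')
  obtain ⟨h', hh'S, hhh'⟩ := hmix h hhS k hk (ε / 2) (ENNReal.half_pos hε.ne')
  refine ⟨h', hh'S, ?_⟩
  have hpt : ∀ q, ENNReal.ofReal ((f ⊔ k) q - h' q) ≤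
      ENNReal.ofReal (f q - h q) + ENNReal.ofReal ((h ⊔ k) q - h' q) := fun q => by
    simp only [Pi.sup_apply]
    rcases le_total (f q) (h q) with hle | hle
    · refine le_add_left (ENNReal.ofReal_le_ofReal ?_)
      linarith [max_le_max_right (k q) hle]
    · refine le_trans (ENNReal.ofReal_le_ofReal ?_) ENNReal.ofReal_add_le
      have := max_sub_max_le_max (f q) (k q) (h q) (k q)
      rw [sub_self, max_eq_left (sub_nonneg.2 hle)] at this
      linarith
  calc ∫⁻ q, ENNReal.ofReal ((f ⊔ k) q - h' q) ∂ν
      ≤ ∫⁻ q, ENNReal.ofReal (f q - h q) + ENNReal.ofReal ((h ⊔ k) q - h' q) ∂ν :=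
        lintegral_mono hpt
    _ = ∫⁻ q, ENNReal.ofReal (f q - h q) ∂ν + ∫⁻ q, ENNReal.ofReal ((h ⊔ k) q - h' q) ∂ν :=
        lintegral_add_right' _ ((((hS h hhS).sup (hS k hk)).sub (hS h' hh'S)).ennreal_ofReal)
    _ ≤ ε := by grw [hfh, hhh', ENNReal.add_halves]

lemma ApproxDominated.ofReal_integral_le (hSi : ∀ h ∈ S, Integrable h ν) {C : ℝ≥0∞}
    (hC : ∀ h ∈ S, ENNReal.ofReal (∫ q, h q ∂ν) ≤ C) {f : α → ℝ} (hf : ApproxDominated ν S f)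
    (hfi : Integrable f ν) : ENNReal.ofReal (∫ q, f q ∂ν) ≤ C := by
  refine ENNReal.le_of_forall_pos_le_add fun ε hε _ => ?_
  obtain ⟨h, hhS, hfh⟩ := hf ε (ENNReal.coe_pos.2 hε)
  calc ENNReal.ofReal (∫ q, f q ∂ν)
      = ENNReal.ofReal (∫ q, h q ∂ν + ∫ q, (f q - h q) ∂ν) := by
        rw [integral_sub hfi (hSi h hhS), add_sub_cancel]
    _ ≤ ENNReal.ofReal (∫ q, h q ∂ν) + ∫⁻ q, ENNReal.ofReal (f q - h q) ∂ν :=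
        ENNReal.ofReal_add_le.trans <| by
          gcongr; exact ofReal_integral_le_lintegral_ofReal (hfi.sub (hSi h hhS))
    _ ≤ C + ε := add_le_add (hC h hhS) hfh

theorem lintegral_iSup_ofReal_le_of_approxDominated (hSi : ∀ h ∈ S, Integrable h ν)
    (hS0 : 0 ∈ S) (hmix : ∀ h₁ ∈ S, ∀ h₂ ∈ S, ApproxDominated ν S (h₁ ⊔ h₂)) {C : ℝ≥0∞}
    (hC : ∀ h ∈ S, ENNReal.ofReal (∫ q, h q ∂ν) ≤ C) {ι : Type*} [Countable ι]
    (hs : ι → α → ℝ) (hsS : ∀ i, hs i ∈ S) :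
    ∫⁻ q, ⨆ i, ENNReal.ofReal (hs i q) ∂ν ≤ C := by
  -- `G s = max 0 (max_{i ∈ s} hs i)`; the `0` makes `∫⁻ ofReal (G s) = ofReal (∫ G s)`
  set G : Finset ι → α → ℝ := fun s q => ((s.sup fun i => (hs i q).toNNReal : ℝ≥0) : ℝ)
  have hG : ∀ s, Integrable (G s) ν ∧ ApproxDominated ν S (G s) := by
    intro s
    induction s using Finset.induction_on with
    | empty =>
      have : G ∅ = 0 := by funext q; simp [G]
      exact this ▸ ⟨integrable_zero _ _ _, approxDominated_of_mem hS0⟩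
    | insert i s _ ih =>
      have hins : G (insert i s) = G s ⊔ hs i := by
        funext q
        have : 0 ≤ G s q := NNReal.coe_nonneg _
        simp only [G, Finset.sup_insert, NNReal.coe_max, Real.coe_toNNReal', Pi.sup_apply]
        grind
      rw [hins]
      exact ⟨ih.1.sup (hSi _ (hsS i)),
        ih.2.sup (fun h hh => (hSi h hh).aemeasurable) hmix (hsS i)⟩
  have hGsup : ∀ s q, ENNReal.ofReal (G s q) = ⨆ i ∈ s, ENNReal.ofReal (hs i q) := by
    intro s q
    rw [ENNReal.ofReal_coe_nnreal, ENNReal.coe_finset_sup, Finset.sup_eq_iSup]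
    rfl
  calc ∫⁻ q, ⨆ i, ENNReal.ofReal (hs i q) ∂ν
      = ∫⁻ q, ⨆ s : Finset ι, ENNReal.ofReal (G s q) ∂ν := by
        simp_rw [hGsup, ← iSup_eq_iSup_finset]
    _ = ⨆ s : Finset ι, ∫⁻ q, ENNReal.ofReal (G s q) ∂ν := by
        refine lintegral_iSup_directed (fun s => (hG s).1.aemeasurable.ennreal_ofReal) ?_
        refine Monotone.directed_le fun s t hst q => ?_
        simp only [hGsup]
        exact biSup_mono fun i hi => hst hi
    _ ≤ C := iSup_le fun s => by
        rw [← ofReal_integral_eq_lintegral_ofReal (hG s).1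
          (Eventually.of_forall fun q => NNReal.coe_nonneg _)]
        exact (hG s).2.ofReal_integral_le hSi hC (hG s).1

end ApproxDominated

section Mixing

variable {α : Type*} [PseudoMetricSpace α] [MeasurableSpace α] [BorelSpace α]

lemma exists_continuous_measure_ne_indicator_lt (ν : Measure α) [IsFiniteMeasure ν]
    {A : Set α} (hA : MeasurableSet A) {ε : ℝ≥0∞} (hε : 0 < ε) :
    ∃ χ : α → ℝ, Continuous χ ∧ (∀ q, χ q ∈ Icc 0 1) ∧ ν {q | χ q ≠ A.indicator 1 q} < ε := by
  obtain ⟨F, hFA, hF, hAF⟩ :=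
    hA.exists_isClosed_sdiff_lt (measure_ne_top ν A) (ENNReal.half_pos hε.ne').ne'
  obtain ⟨U, hAU, hU, -, hUA⟩ :=
    hA.exists_isOpen_sdiff_lt (measure_ne_top ν A) (ENNReal.half_pos hε.ne').ne'
  obtain ⟨χ, hχU, hχF, hχ01⟩ := exists_continuous_zero_one_of_isClosed hU.isClosed_compl hF
    (disjoint_compl_left_iff_subset.2 (hFA.trans hAU))
  refine ⟨χ, χ.continuous, hχ01, ?_⟩
  have hsub : {q | χ q ≠ A.indicator 1 q} ⊆ (U \ A) ∪ (A \ F) := by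
    intro q hq
    by_cases hqA : q ∈ A
    · by_cases hqF : q ∈ F
      · simp [hχF hqF, hqA] at hq
      · exact Or.inr ⟨hqA, hqF⟩
    · by_cases hqU : q ∈ U
      · exact Or.inl ⟨hqU, hqA⟩
      · simp [hχU hqU, hqA] at hq
  calc ν {q | χ q ≠ A.indicator 1 q} ≤ ν (U \ A) + ν (A \ F) :=
        (measure_mono hsub).trans (measure_union_le _ _)
    _ < ε / 2 + ε / 2 := ENNReal.add_lt_add hUA hAF
    _ = ε := ENNReal.add_halves ε

lemma exists_continuous_lintegral_max_sub_mix_le (ν : Measure α) {h₁ h₂ : α → ℝ}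
    (hm₁ : Measurable h₁) (hm₂ : Measurable h₂) (hi : Integrable (h₁ - h₂) ν)
    {ε : ℝ≥0∞} (hε : 0 < ε) :
    ∃ χ : α → ℝ, Continuous χ ∧ (∀ q, χ q ∈ Icc 0 1) ∧
      ∫⁻ q, ENNReal.ofReal (max (h₁ q) (h₂ q) - (χ q * h₁ q + (1 - χ q) * h₂ q)) ∂ν ≤ ε := by
  set w : α → ℝ≥0∞ := fun q => ENNReal.ofReal |h₁ q - h₂ q|
  have : IsFiniteMeasure (ν.withDensity w) :=
    isFiniteMeasure_withDensity_ofReal hi.abs.hasFiniteIntegral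
  set A := {q | h₂ q ≤ h₁ q}
  have hA : MeasurableSet A := measurableSet_le hm₂ hm₁
  obtain ⟨χ, hχ, hχ01, hB⟩ := exists_continuous_measure_ne_indicator_lt (ν.withDensity w) hA hε
  refine ⟨χ, hχ, hχ01, ?_⟩
  set B := {q | χ q ≠ A.indicator 1 q}
  have hBm : MeasurableSet B :=
    (measurableSet_eq_fun hχ.measurable (measurable_one.indicator hA)).compl
  have hpt : ∀ q, ENNReal.ofReal (max (h₁ q) (h₂ q) - (χ q * h₁ q + (1 - χ q) * h₂ q)) ≤
      B.indicator w q := by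
    intro q
    obtain ⟨h0, h1⟩ := hχ01 q
    by_cases hqB : q ∈ B
    · rw [indicator_of_mem hqB]
      refine ENNReal.ofReal_le_ofReal ?_
      rcases le_total (h₂ q) (h₁ q) with h | h
      · rw [max_eq_left h, abs_of_nonneg (sub_nonneg.2 h)]; nlinarith
      · rw [max_eq_right h, abs_of_nonpos (sub_nonpos.2 h)]; nlinarith
    · rw [indicator_of_notMem hqB, nonpos_iff_eq_zero, ENNReal.ofReal_eq_zero]
      have hχq : χ q = A.indicator 1 q := not_not.1 hqB
      by_cases hqA : q ∈ A
      · rw [hχq, indicator_of_mem hqA, max_eq_left hqA]; simp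
      · have : h₁ q ≤ h₂ q := (lt_of_not_ge hqA).le
        rw [hχq, indicator_of_notMem hqA, max_eq_right this]; simp
  calc _ ≤ ∫⁻ q, B.indicator w q ∂ν := lintegral_mono hpt
    _ = ν.withDensity w B := by rw [lintegral_indicator hBm, withDensity_apply _ hBm]
    _ ≤ ε := hB.le

end Mixing

section PairingDensity

variable {α : Type*} [MeasurableSpace α]

noncomputable def measureFunctional (ν : Measure α) (f : α → ℝ≥0∞ → ℝ≥0∞) (g : α → ℝ≥0∞)
    (μ : Measure α) : ℝ≥0∞ :=
  ∫⁻ q, f q (μ.rnDeriv ν q) ∂ν + ∫⁻ q, g q ∂(μ.singularPart ν)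

/-- A single density for the pairing `∫ ψ dμ + ∫ b dν` with respect to `ν + μˢ`. -/
noncomputable def pairingDensity (ν μ : Measure α) (ψ b : α → ℝ) (q : α) : ℝ :=
  if q ∈ (μ.mutuallySingular_singularPart ν).nullSet then ψ q * (μ.rnDeriv ν q).toReal + b q
  else ψ q

variable {ν μ : Measure α} {ψ b : α → ℝ}

lemma pairingDensity_ae_eq :
    pairingDensity ν μ ψ b =ᵐ[ν] fun q => ψ q * (μ.rnDeriv ν q).toReal + b q := by
  filter_upwards [measure_eq_zero_iff_ae_notMem.1
    (μ.mutuallySingular_singularPart ν).measure_compl_nullSet] with q hq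
  rw [pairingDensity, if_pos (not_not.1 hq)]

lemma pairingDensity_ae_eq_singularPart : pairingDensity ν μ ψ b =ᵐ[μ.singularPart ν] ψ := by
  filter_upwards [measure_eq_zero_iff_ae_notMem.1
    (μ.mutuallySingular_singularPart ν).measure_nullSet] with q hq
  rw [pairingDensity, if_neg hq]

lemma measurable_pairingDensity (hψ : Measurable ψ) (hb : Measurable b) :
    Measurable (pairingDensity ν μ ψ b) :=
  Measurable.ite (μ.mutuallySingular_singularPart ν).measurableSet_nullSet
    ((hψ.mul (μ.measurable_rnDeriv ν).ennreal_toReal).add hb) hψ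

lemma pairingDensity_zero : pairingDensity ν μ 0 0 = 0 := by
  funext q; simp [pairingDensity]

lemma pairingDensity_mix (χ ψ₁ b₁ ψ₂ b₂ : α → ℝ) :
    pairingDensity ν μ (fun q => χ q * ψ₁ q + (1 - χ q) * ψ₂ q)
        (fun q => χ q * b₁ q + (1 - χ q) * b₂ q) =
      fun q => χ q * pairingDensity ν μ ψ₁ b₁ q + (1 - χ q) * pairingDensity ν μ ψ₂ b₂ q := by
  funext q; unfold pairingDensity; split_ifs <;> ring

end PairingDensity

section AffineMinorant

variable {α : Type*} [TopologicalSpace α] {f : α → ℝ≥0∞ → ℝ≥0∞} {g : α → ℝ≥0∞}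

structure IsAffineMinorant (f : α → ℝ≥0∞ → ℝ≥0∞) (g : α → ℝ≥0∞) (ψ b : α → ℝ) : Prop where
  continuous_slope : Continuous ψ
  continuous_intercept : Continuous b
  hasCompactSupport_slope : HasCompactSupport ψ
  hasCompactSupport_intercept : HasCompactSupport b
  ofReal_slope_le : ∀ q, ENNReal.ofReal (ψ q) ≤ g q
  ofReal_affine_le : ∀ q, ∀ t ≠ ∞, ENNReal.ofReal (ψ q * t.toReal + b q) ≤ f q t

lemma ofReal_mix_le {x a b : ℝ} {c : ℝ≥0∞} (hx : x ∈ Icc 0 1) (ha : ENNReal.ofReal a ≤ c)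
    (hb : ENNReal.ofReal b ≤ c) : ENNReal.ofReal (x * a + (1 - x) * b) ≤ c := by
  refine le_trans (ENNReal.ofReal_le_ofReal ?_) ((ENNReal.ofReal_max a b).trans_le (max_le ha hb))
  nlinarith [le_max_left a b, le_max_right a b, hx.1, hx.2]

lemma isAffineMinorant_zero : IsAffineMinorant f g 0 0 :=
  ⟨continuous_const, continuous_const, .zero, .zero, by simp, by simp⟩

lemma IsAffineMinorant.mix {ψ₁ b₁ ψ₂ b₂ : α → ℝ} (h₁ : IsAffineMinorant f g ψ₁ b₁)
    (h₂ : IsAffineMinorant f g ψ₂ b₂) {χ : α → ℝ} (hχ : Continuous χ)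
    (hχ01 : ∀ q, χ q ∈ Icc 0 1) :
    IsAffineMinorant f g (fun q => χ q * ψ₁ q + (1 - χ q) * ψ₂ q)
      (fun q => χ q * b₁ q + (1 - χ q) * b₂ q) where
  continuous_slope := by have := h₁.continuous_slope; have := h₂.continuous_slope; fun_prop
  continuous_intercept := by
    have := h₁.continuous_intercept; have := h₂.continuous_intercept; fun_prop
  hasCompactSupport_slope :=
    h₁.hasCompactSupport_slope.mul_left.add (f := χ * ψ₁) h₂.hasCompactSupport_slope.mul_left
  hasCompactSupport_intercept :=
    h₁.hasCompactSupport_intercept.mul_left.add (f := χ * b₁)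
      h₂.hasCompactSupport_intercept.mul_left
  ofReal_slope_le q := ofReal_mix_le (hχ01 q) (h₁.ofReal_slope_le q) (h₂.ofReal_slope_le q)
  ofReal_affine_le q t ht := by
    convert ofReal_mix_le (hχ01 q) (h₁.ofReal_affine_le q t ht) (h₂.ofReal_affine_le q t ht)
      using 2
    ring

end AffineMinorant

section Duality

variable {α : Type*} [MeasurableSpace α] {f : α → ℝ≥0∞ → ℝ≥0∞} {g : α → ℝ≥0∞}
  {ν μ : Measure α} {ψ b : α → ℝ}

section Topological

variable [TopologicalSpace α]

lemma IsAffineMinorant.lintegral_ofReal_pairingDensity_le [SigmaFinite μ]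
    (h : IsAffineMinorant f g ψ b) :
    ∫⁻ q, ENNReal.ofReal (pairingDensity ν μ ψ b q) ∂(ν + μ.singularPart ν) ≤
      measureFunctional ν f g μ := by
  rw [lintegral_add_measure, measureFunctional]
  refine add_le_add (lintegral_mono_ae ?_) (lintegral_mono_ae ?_)
  · filter_upwards [pairingDensity_ae_eq, μ.rnDeriv_lt_top ν] with q hq hlt
    rw [hq]
    exact h.ofReal_affine_le q _ hlt.ne
  · filter_upwards [pairingDensity_ae_eq_singularPart] with q hq
    rw [hq]
    exact h.ofReal_slope_le q

variable [OpensMeasurableSpace α] [IsFiniteMeasureOnCompacts μ] [SigmaFinite μ]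

lemma integrable_mul_toReal_rnDeriv (hψ : Continuous ψ) (hψs : HasCompactSupport ψ) :
    Integrable (fun q => ψ q * (μ.rnDeriv ν q).toReal) ν := by
  have := (hψ.integrable_of_hasCompactSupport hψs (μ := μ)).mono_measure
    (μ.withDensity_rnDeriv_le ν)
  rw [integrable_withDensity_iff_integrable_smul' (μ.measurable_rnDeriv ν)
    (μ.rnDeriv_lt_top ν)] at this
  simpa [mul_comm] using this

lemma integral_eq_integral_singularPart_add [μ.HaveLebesgueDecomposition ν]
    (hψ : Continuous ψ) (hψs : HasCompactSupport ψ) :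
    ∫ q, ψ q ∂μ = ∫ q, ψ q ∂(μ.singularPart ν) + ∫ q, ψ q * (μ.rnDeriv ν q).toReal ∂ν := by
  have hint := hψ.integrable_of_hasCompactSupport hψs (μ := μ)
  conv_lhs => rw [μ.haveLebesgueDecomposition_add ν]
  rw [integral_add_measure (hint.mono_measure (μ.singularPart_le ν))
      (hint.mono_measure (μ.withDensity_rnDeriv_le ν)),
    integral_withDensity_eq_integral_toReal_smul (μ.measurable_rnDeriv ν) (μ.rnDeriv_lt_top ν)]
  simp [mul_comm]

variable [IsFiniteMeasureOnCompacts ν]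

lemma integrable_pairingDensity (hψ : Continuous ψ) (hψs : HasCompactSupport ψ)
    (hb : Continuous b) (hbs : HasCompactSupport b) :
    Integrable (pairingDensity ν μ ψ b) (ν + μ.singularPart ν) :=
  integrable_add_measure.2
    ⟨((integrable_mul_toReal_rnDeriv hψ hψs).add (hb.integrable_of_hasCompactSupport hbs)).congr
      pairingDensity_ae_eq.symm,
    ((hψ.integrable_of_hasCompactSupport hψs (μ := μ)).mono_measure (μ.singularPart_le ν)).congr
      pairingDensity_ae_eq_singularPart.symm⟩

lemma integral_pairingDensity [μ.HaveLebesgueDecomposition ν] (hψ : Continuous ψ)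
    (hψs : HasCompactSupport ψ) (hb : Continuous b) (hbs : HasCompactSupport b) :
    ∫ q, pairingDensity ν μ ψ b q ∂(ν + μ.singularPart ν) = ∫ q, ψ q ∂μ + ∫ q, b q ∂ν := by
  have hi := integrable_pairingDensity (ν := ν) (μ := μ) hψ hψs hb hbs
  rw [integral_add_measure (hi.mono_measure (Measure.le_add_right le_rfl))
      (hi.mono_measure (Measure.le_add_left le_rfl)),
    integral_congr_ae pairingDensity_ae_eq, integral_congr_ae pairingDensity_ae_eq_singularPart,
    integral_add (integrable_mul_toReal_rnDeriv hψ hψs) (hb.integrable_of_hasCompactSupport hbs),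
    integral_eq_integral_singularPart_add (ν := ν) (μ := μ) hψ hψs]
  ring

theorem IsAffineMinorant.ofReal_pairing_le_measureFunctional [μ.HaveLebesgueDecomposition ν]
    (h : IsAffineMinorant f g ψ b) :
    ENNReal.ofReal (∫ q, ψ q ∂μ + ∫ q, b q ∂ν) ≤ measureFunctional ν f g μ := by
  rw [← integral_pairingDensity h.continuous_slope h.hasCompactSupport_slope
    h.continuous_intercept h.hasCompactSupport_intercept]
  exact (ofReal_integral_le_lintegral_ofReal (integrable_pairingDensity h.continuous_slope
    h.hasCompactSupport_slope h.continuous_intercept h.hasCompactSupport_intercept)).trans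
    h.lintegral_ofReal_pairingDensity_le

end Topological

lemma measureFunctional_le_lintegral_iSup [SigmaFinite μ] {ι : Type*} [Countable ι]
    {ψs bs : ι → α → ℝ}
    (hf : ∀ᵐ q ∂ν, ∀ t ≠ ∞, f q t ≤ ⨆ i, ENNReal.ofReal (ψs i q * t.toReal + bs i q))
    (hg : ∀ q, g q ≤ ⨆ i, ENNReal.ofReal (ψs i q)) :
    measureFunctional ν f g μ ≤
      ∫⁻ q, ⨆ i, ENNReal.ofReal (pairingDensity ν μ (ψs i) (bs i) q) ∂(ν + μ.singularPart ν) := by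
  rw [lintegral_add_measure, measureFunctional]
  refine add_le_add (lintegral_mono_ae ?_) (lintegral_mono_ae ?_)
  · filter_upwards [hf, μ.rnDeriv_lt_top ν, ae_all_iff.2 fun i : ι =>
      pairingDensity_ae_eq (μ := μ) (ψ := ψs i) (b := bs i)]
      with q hfq hlt hq
    simp only [hq]
    exact hfq _ hlt.ne
  · filter_upwards [ae_all_iff.2 fun i : ι =>
      pairingDensity_ae_eq_singularPart (ν := ν) (ψ := ψs i) (b := bs i)] with q hq
    simp only [hq]
    exact hg q

theorem measureFunctional_le_of_forall_isAffineMinorant [PseudoMetricSpace α] [BorelSpace α]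
    [IsFiniteMeasureOnCompacts ν] [IsFiniteMeasureOnCompacts μ] [SigmaFinite μ]
    [μ.HaveLebesgueDecomposition ν] {ι : Type*} [Countable ι] {ψs bs : ι → α → ℝ}
    (hmin : ∀ i, IsAffineMinorant f g (ψs i) (bs i))
    (hf : ∀ᵐ q ∂ν, ∀ t ≠ ∞, f q t ≤ ⨆ i, ENNReal.ofReal (ψs i q * t.toReal + bs i q))
    (hg : ∀ q, g q ≤ ⨆ i, ENNReal.ofReal (ψs i q)) {C : ℝ≥0∞}
    (hC : ∀ ψ b, IsAffineMinorant f g ψ b → ENNReal.ofReal (∫ q, ψ q ∂μ + ∫ q, b q ∂ν) ≤ C) :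
    measureFunctional ν f g μ ≤ C := by
  set S := {h | ∃ ψ b, IsAffineMinorant f g ψ b ∧ pairingDensity ν μ ψ b = h}
  have hSi : ∀ h ∈ S, Integrable h (ν + μ.singularPart ν) := by
    rintro _ ⟨ψ, b, h, rfl⟩
    exact integrable_pairingDensity h.continuous_slope h.hasCompactSupport_slope
      h.continuous_intercept h.hasCompactSupport_intercept
  have hSm : ∀ h ∈ S, Measurable h := by
    rintro _ ⟨ψ, b, h, rfl⟩
    exact measurable_pairingDensity h.continuous_slope.measurable
      h.continuous_intercept.measurable
  refine (measureFunctional_le_lintegral_iSup hf hg).trans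
    (lintegral_iSup_ofReal_le_of_approxDominated hSi
      ⟨0, 0, isAffineMinorant_zero, pairingDensity_zero⟩ ?_ ?_
      (fun i => pairingDensity ν μ (ψs i) (bs i)) fun i => ⟨_, _, hmin i, rfl⟩)
  · rintro h₁ hh₁ h₂ hh₂ ε hε
    obtain ⟨χ, hχ, hχ01, hle⟩ := exists_continuous_lintegral_max_sub_mix_le _
      (hSm h₁ hh₁) (hSm h₂ hh₂) ((hSi h₁ hh₁).sub (hSi h₂ hh₂)) hε
    obtain ⟨ψ₁, b₁, hP₁, rfl⟩ := hh₁
    obtain ⟨ψ₂, b₂, hP₂, rfl⟩ := hh₂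
    exact ⟨_, ⟨_, _, hP₁.mix hP₂ hχ hχ01, rfl⟩, by rw [pairingDensity_mix]; exact hle⟩
  · rintro _ ⟨ψ, b, h, rfl⟩
    rw [integral_pairingDensity h.continuous_slope h.hasCompactSupport_slope
      h.continuous_intercept h.hasCompactSupport_intercept]
    exact hC ψ b h

theorem measureFunctional_le_of_tendsto [PseudoMetricSpace α] [ProperSpace α] [BorelSpace α]
    [IsFiniteMeasureOnCompacts ν] [IsFiniteMeasureOnCompacts μ] {ι : Type*} [Countable ι]
    {ψs bs : ι → α → ℝ} (hmin : ∀ i, IsAffineMinorant f g (ψs i) (bs i))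
    (hf : ∀ᵐ q ∂ν, ∀ t ≠ ∞, f q t ≤ ⨆ i, ENNReal.ofReal (ψs i q * t.toReal + bs i q))
    (hg : ∀ q, g q ≤ ⨆ i, ENNReal.ofReal (ψs i q)) {μs : ℕ → Measure α}
    (hμs : ∀ k, IsFiniteMeasureOnCompacts (μs k)) {C : ℝ≥0∞}
    (hC : ∀ k, measureFunctional ν f g (μs k) ≤ C)
    (hconv : ∀ ψ : α → ℝ, Continuous ψ → HasCompactSupport ψ →
      Tendsto (fun k => ∫ q, ψ q ∂(μs k)) atTop (𝓝 (∫ q, ψ q ∂μ))) :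
    measureFunctional ν f g μ ≤ C := by
  refine measureFunctional_le_of_forall_isAffineMinorant hmin hf hg fun ψ b h => ?_
  have hk : ∀ k, ENNReal.ofReal (∫ q, ψ q ∂(μs k) + ∫ q, b q ∂ν) ≤ C := fun k => by
    have := hμs k
    exact h.ofReal_pairing_le_measureFunctional.trans (hC k)
  exact le_of_tendsto' (ENNReal.tendsto_ofReal
    ((hconv ψ h.continuous_slope h.hasCompactSupport_slope).add_const _)) hk

end Duality

section RelativeEntropy

variable {γ : ℝ}

lemma one_add_mul_le_rpow_one_add_of_nonpos {s : ℝ} (hs : -1 < s) {p : ℝ} (hp : p ≤ 0) :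
    1 + p * s ≤ (1 + s) ^ p := by
  have hx : 0 < 1 + s := by linarith
  rw [Real.rpow_def_of_pos hx]
  have := mul_le_mul_of_nonpos_left (Real.log_le_sub_one_of_pos hx) hp
  linarith [Real.add_one_le_exp (Real.log (1 + s) * p)]

lemma pres_pos {v : ℝ} (hv : 0 < v) : 0 < pres γ v := Real.rpow_pos_of_pos hv _

lemma pres_le_pres (hγ : 0 ≤ γ) {a b : ℝ} (ha : 0 < a) (hab : a ≤ b) : pres γ b ≤ pres γ a :=
  Real.rpow_le_rpow_of_nonpos ha hab (neg_nonpos.2 hγ)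

lemma pres_mul_self {v : ℝ} (hv : 0 < v) : pres γ v * v = v ^ (1 - γ) := by
  rw [pres, sub_eq_neg_add, Real.rpow_add hv, Real.rpow_one]

lemma Qrel_nonneg_s15 (hγ : 1 < γ) {t w : ℝ} (ht : 0 < t) (hw : 0 < w) : 0 ≤ Qrel γ t w := by
  have hB := one_add_mul_le_rpow_one_add_of_nonpos (s := t / w - 1) (by
    have := div_pos ht hw; linarith) (p := 1 - γ) (by linarith)
  rw [add_sub_cancel, Real.div_rpow ht.le hw.le] at hB
  have hwσ : 0 < w ^ (1 - γ) := Real.rpow_pos_of_pos hw _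
  have key : Qrel γ t w = w ^ (1 - γ) / (γ - 1) *
      (t ^ (1 - γ) / w ^ (1 - γ) - (1 + (1 - γ) * (t / w - 1))) := by
    have hp : pres γ w = w ^ (1 - γ) / w := by rw [← pres_mul_self hw]; field_simp
    have hγ1 : γ - 1 ≠ 0 := by linarith
    rw [Qrel, Qf, Qf, hp]
    field_simp
    ring
  rw [key]
  exact mul_nonneg (div_nonneg hwσ.le (by linarith)) (sub_nonneg.2 hB)

noncomputable def QrelTangent (γ w u t : ℝ) : ℝ := Qrel γ u w + (pres γ w - pres γ u) * (t - u)

lemma Qrel_eq_QrelTangent_add (γ t w u : ℝ) : Qrel γ t w = QrelTangent γ w u t + Qrel γ t u := by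
  unfold QrelTangent Qrel; ring

lemma QrelTangent_le_Qrel (hγ : 1 < γ) {w u t : ℝ} (hu : 0 < u) (ht : 0 < t) :
    QrelTangent γ w u t ≤ Qrel γ t w := by
  rw [Qrel_eq_QrelTangent_add γ t w u]
  linarith [Qrel_nonneg_s15 hγ ht hu]

lemma QrelTangent_self (γ w t : ℝ) : QrelTangent γ w t t = Qrel γ t w := by
  simp [QrelTangent]

lemma QrelTangent_eq_add_zero (γ w u t : ℝ) :
    QrelTangent γ w u t = (pres γ w - pres γ u) * t + QrelTangent γ w u 0 := by
  unfold QrelTangent; ring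

lemma QrelTangent_zero (hγ : γ ≠ 1) {w u : ℝ} (hw : 0 < w) (hu : 0 < u) :
    QrelTangent γ w u 0 = γ / (γ - 1) * (u ^ (1 - γ) - w ^ (1 - γ)) := by
  have h1 : γ - 1 ≠ 0 := sub_ne_zero.2 hγ
  have hu' := pres_mul_self (γ := γ) hu
  have hw' := pres_mul_self (γ := γ) hw
  unfold QrelTangent Qrel Qf
  field_simp
  linear_combination (γ - 1) * hu' - (γ - 1) * hw'

lemma continuousAt_QrelTangent {w t u : ℝ} (hu : 0 < u) :
    ContinuousAt (fun u => QrelTangent γ w u t) u := by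
  unfold QrelTangent Qrel Qf pres
  fun_prop (disch := first | positivity | (left; positivity))

lemma le_iSup_posRat_of_continuousAt {F : ℝ → ℝ≥0∞} {u : ℝ} (hu : 0 < u)
    (hF : ContinuousAt F u) : F u ≤ ⨆ r : {r : ℚ // 0 < r}, F r := by
  have hmem : u ∈ closure (Ioi 0 ∩ range ((↑) : ℚ → ℝ)) :=
    Rat.denseRange_cast.open_subset_closure_inter isOpen_Ioi hu
  have := mem_closure_iff_nhdsWithin_neBot.1 hmem
  refine le_of_tendsto (x := 𝓝[Ioi 0 ∩ range ((↑) : ℚ → ℝ)] u)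
    (hF.tendsto.mono_left nhdsWithin_le_nhds) (eventually_nhdsWithin_of_forall ?_)
  rintro _ ⟨hr, r, rfl⟩
  exact le_iSup (fun r : {r : ℚ // 0 < r} => F r) ⟨r, Rat.cast_pos.1 (mem_Ioi.1 hr)⟩

lemma ofReal_mul_QrelE_le_iSup (hγ : 1 < γ) {c w : ℝ} (hc : 0 ≤ c) (hw : 0 < w) {t : ℝ≥0∞}
    (ht : t ≠ ∞) :
    ENNReal.ofReal c * QrelE γ t w ≤
      ⨆ u : {u : ℚ // 0 < u}, ENNReal.ofReal (c * QrelTangent γ w u t.toReal) := by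
  have hcont : ∀ {s u : ℝ}, 0 < u →
      ContinuousAt (fun u => ENNReal.ofReal (c * QrelTangent γ w u s)) u := fun hu =>
    ENNReal.continuous_ofReal.continuousAt.comp
      (continuousAt_const.mul (continuousAt_QrelTangent hu))
  rcases hc.eq_or_lt with rfl | hc
  · simp
  by_cases ht0 : t = 0
  · subst ht0
    rw [QrelE, if_pos (Or.inl rfl), ENNReal.mul_top (ENNReal.ofReal_pos.2 hc).ne',
      ENNReal.toReal_zero]
    -- the intercepts `γ/(γ-1) (u^(1-γ) - w^(1-γ))` blow up as `u → 0`
    have hlim : Tendsto (fun u => ENNReal.ofReal (c * QrelTangent γ w u 0)) (𝓝[>] 0) (𝓝 ⊤) := by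
      refine ENNReal.tendsto_ofReal_atTop.comp ?_
      have hpow := tendsto_atTop_add_const_right _ (-w ^ (1 - γ))
        (tendsto_rpow_neg_nhdsGT_zero (by linarith : 1 - γ < 0))
      refine ((hpow.const_mul_atTop (r := γ / (γ - 1)) (div_pos (by linarith) (by linarith))
        ).const_mul_atTop hc).congr' (eventually_nhdsWithin_of_forall fun u hu => ?_)
      dsimp only
      rw [QrelTangent_zero hγ.ne' hw hu]
      ring
    exact le_of_tendsto hlim
      (eventually_nhdsWithin_of_forall fun u hu => le_iSup_posRat_of_continuousAt hu (hcont hu))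
  · have htpos : 0 < t.toReal := ENNReal.toReal_pos ht0 ht
    rw [QrelE, if_neg (by simp [ht0, ht]), ← ENNReal.ofReal_mul hc.le, ← QrelTangent_self]
    exact le_iSup_posRat_of_continuousAt htpos (hcont htpos)

lemma ofReal_mul_pres_le_iSup (hγ : 0 < γ) {c w : ℝ} :
    ENNReal.ofReal (c * pres γ w) ≤
      ⨆ u : {u : ℚ // 0 < u}, ENNReal.ofReal (c * (pres γ w - pres γ u)) := by
  have hlim : Tendsto (fun u => ENNReal.ofReal (c * (pres γ w - pres γ u))) atTop
      (𝓝 (ENNReal.ofReal (c * pres γ w))) := by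
    have h0 : Tendsto (pres γ) atTop (𝓝 0) := tendsto_rpow_neg_atTop hγ
    simpa using ENNReal.tendsto_ofReal ((h0.const_sub (pres γ w)).const_mul c)
  refine le_of_tendsto hlim ((eventually_gt_atTop 0).mono fun u hu =>
    le_iSup_posRat_of_continuousAt (F := fun u => ENNReal.ofReal (c * (pres γ w - pres γ u)))
      hu (ENNReal.continuous_ofReal.continuousAt.comp ?_))
  unfold pres
  fun_prop (disch := first | positivity | (left; positivity))

lemma ofReal_affine_le_ofReal_mul_QrelE {c s β w : ℝ} (hc : 0 ≤ c)
    (h : ∀ t > 0, s * t + β ≤ Qrel γ t w) {t : ℝ≥0∞} (ht : t ≠ ∞) :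
    ENNReal.ofReal (c * s * t.toReal + c * β) ≤ ENNReal.ofReal c * QrelE γ t w := by
  rcases hc.eq_or_lt with rfl | hc
  · simp
  by_cases ht0 : t = 0
  · rw [QrelE, if_pos (Or.inl ht0), ENNReal.mul_top (ENNReal.ofReal_pos.2 hc).ne']
    exact le_top
  · rw [QrelE, if_neg (by simp [ht0, ht]), ← ENNReal.ofReal_mul hc.le]
    refine ENNReal.ofReal_le_ofReal ?_
    have := mul_le_mul_of_nonneg_left (h _ (ENNReal.toReal_pos ht0 ht)) hc.le
    linarith

end RelativeEntropy

section StepProfile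

variable {α : Type*} [PseudoMetricSpace α]

noncomputable def cutoff (E : Set α) (n : ℕ) (q : α) : ℝ :=
  thickenedIndicator (Nat.one_div_pos_of_nat (α := ℝ) (n := n)) E q

lemma continuous_cutoff (E : Set α) (n : ℕ) : Continuous (cutoff E n) :=
  NNReal.continuous_coe.comp (thickenedIndicator _ E).continuous

lemma cutoff_mem_Icc (E : Set α) (n : ℕ) (q : α) : cutoff E n q ∈ Icc 0 1 :=
  ⟨NNReal.coe_nonneg _, NNReal.coe_le_one.2 (thickenedIndicator_le_one _ E q)⟩

lemma cutoff_of_mem_closure {E : Set α} {q : α} (hq : q ∈ closure E) (n : ℕ) :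
    cutoff E n q = 1 := by
  simp [cutoff, thickenedIndicator_one_of_mem_closure _ E hq]

lemma exists_cutoff_eq_zero {E : Set α} {q : α} (hq : q ∉ closure E) : ∃ n, cutoff E n q = 0 := by
  rw [closure_eq_iInter_thickening' E (range fun n : ℕ => 1 / ((n : ℝ) + 1))
    (by rintro _ ⟨n, rfl⟩; exact Nat.one_div_pos_of_nat (α := ℝ))
    (fun ε hε => by
      obtain ⟨n, hn⟩ := exists_nat_one_div_lt hε
      exact ⟨_, ⟨n, rfl⟩, Nat.one_div_pos_of_nat, hn.le⟩)] at hq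
  simp only [mem_iInter, not_forall] at hq
  obtain ⟨_, ⟨n, rfl⟩, hn⟩ := hq
  exact ⟨n, by rw [cutoff, thickenedIndicator_zero _ E hn, NNReal.coe_zero]⟩

abbrev StepIndex : Type := ({u : ℚ // 0 < u} × ℕ) ⊕ ({r : ℚ // 0 < r} × ℕ)

variable (γ vm vp : ℝ) (Ω : Set α)

/-- `inl (u, n)`: the tangent line of `Q(·|v₋)` at `u`, lowered near `Ωᶜ` by a constant that puts it
below `Q(·|v₊)`; `inr (r, n)`: the tangent line of `Q(·|v₊)` at `r`, switched off near `Ω`. -/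
noncomputable def stepSlope : StepIndex → α → ℝ
  | .inl (u, _) => fun _ => pres γ vm - pres γ u
  | .inr (r, n) => fun q => (1 - cutoff Ω n q) * (pres γ vp - pres γ r)

noncomputable def stepIntercept : StepIndex → α → ℝ
  | .inl (u, n) => fun q =>
      QrelTangent γ vm u 0 - cutoff Ωᶜ n q * (Qrel γ vp vm + (pres γ vp - pres γ vm) * vp)
  | .inr (r, n) => fun q => (1 - cutoff Ω n q) * QrelTangent γ vp r 0

variable {γ vm vp Ω}

lemma Qrel_sub_le_Qrel (hγ : 0 ≤ γ) (hvp : 0 < vp) (hvv : vp ≤ vm) {t : ℝ} (ht : 0 ≤ t) :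
    Qrel γ t vm - (Qrel γ vp vm + (pres γ vp - pres γ vm) * vp) ≤ Qrel γ t vp := by
  have hid : Qrel γ t vp - Qrel γ t vm = (pres γ vp - pres γ vm) * (t - vp) - Qrel γ vp vm := by
    unfold Qrel; ring
  have := sub_nonneg.2 (pres_le_pres hγ hvp hvv)
  nlinarith

lemma continuous_stepSlope (i : StepIndex) : Continuous (stepSlope γ vm vp Ω i) := by
  rcases i with ⟨u, n⟩ | ⟨r, n⟩
  · exact continuous_const
  · exact (continuous_const.sub (continuous_cutoff Ω n)).mul continuous_const

lemma continuous_stepIntercept (i : StepIndex) : Continuous (stepIntercept γ vm vp Ω i) := by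
  rcases i with ⟨u, n⟩ | ⟨r, n⟩
  · exact continuous_const.sub ((continuous_cutoff _ n).mul continuous_const)
  · exact (continuous_const.sub (continuous_cutoff Ω n)).mul continuous_const

lemma stepSlope_le_pres (hγ : 1 < γ) (hvp : 0 < vp) (hvv : vp ≤ vm) (i : StepIndex) (q : α) :
    stepSlope γ vm vp Ω i q ≤ pres γ (if q ∈ closure Ω then vm else vp) := by
  have hpvv := pres_le_pres (γ := γ) (by linarith) hvp hvv
  rcases i with ⟨u, n⟩ | ⟨r, n⟩
  · have := pres_pos (γ := γ) (Rat.cast_pos.2 u.2)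
    split_ifs <;> simp only [stepSlope] <;> linarith
  · have hr := pres_pos (γ := γ) (Rat.cast_pos.2 r.2)
    obtain ⟨h0, h1⟩ := cutoff_mem_Icc Ω n q
    split_ifs with hq
    · simp [stepSlope, cutoff_of_mem_closure hq, (pres_pos (γ := γ) (hvp.trans_le hvv)).le]
    · simp only [stepSlope]
      nlinarith [mul_nonneg (sub_nonneg.2 h1) hr.le, mul_nonneg h0 (pres_pos (γ := γ) hvp).le]

lemma stepSlope_mul_add_stepIntercept_le (hγ : 1 < γ) (hvp : 0 < vp) (hvv : vp ≤ vm) (i : StepIndex)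
    (q : α) {t : ℝ} (ht : 0 < t) :
    stepSlope γ vm vp Ω i q * t + stepIntercept γ vm vp Ω i q ≤
      Qrel γ t (if q ∈ Ω then vm else vp) := by
  have hvm := hvp.trans_le hvv
  rcases i with ⟨u, n⟩ | ⟨r, n⟩
  · have htan := QrelTangent_le_Qrel (w := vm) hγ (Rat.cast_pos.2 u.2) ht
    have hD : 0 ≤ Qrel γ vp vm + (pres γ vp - pres γ vm) * vp :=
      add_nonneg (Qrel_nonneg_s15 hγ hvp hvm)
        (mul_nonneg (sub_nonneg.2 (pres_le_pres (γ := γ) (by linarith) hvp hvv)) hvp.le)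
    rw [QrelTangent_eq_add_zero] at htan
    simp only [stepSlope, stepIntercept]
    split_ifs with hq
    · nlinarith [mul_nonneg (cutoff_mem_Icc Ωᶜ n q).1 hD]
    · rw [cutoff_of_mem_closure (subset_closure hq), one_mul]
      linarith [Qrel_sub_le_Qrel (γ := γ) (by linarith) hvp hvv ht.le]
  · obtain ⟨h0, h1⟩ := cutoff_mem_Icc Ω n q
    have hQ : ∀ w, 0 < w → 0 ≤ Qrel γ t w := fun w hw => Qrel_nonneg_s15 hγ ht hw
    have htan := QrelTangent_le_Qrel (w := vp) hγ (Rat.cast_pos.2 r.2) ht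
    simp only [stepSlope, stepIntercept]
    by_cases hq : q ∈ closure Ω
    · rw [cutoff_of_mem_closure hq]
      split_ifs <;> simp [hQ _ hvm, hQ _ hvp]
    · rw [if_neg fun h => hq (subset_closure h)]
      rw [QrelTangent_eq_add_zero γ vp r t] at htan
      nlinarith [hQ _ hvp]

lemma isAffineMinorant_step (hγ : 1 < γ) (hvp : 0 < vp) (hvv : vp ≤ vm) {Φ : α → ℝ}
    (hΦ : Continuous Φ) (hΦs : HasCompactSupport Φ) (hΦ0 : ∀ q, 0 ≤ Φ q) (i : StepIndex) :
    IsAffineMinorant (fun q t => ENNReal.ofReal (Φ q) * QrelE γ t (if q ∈ Ω then vm else vp))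
      (fun q => ENNReal.ofReal (Φ q * pres γ (if q ∈ closure Ω then vm else vp)))
      (fun q => Φ q * stepSlope γ vm vp Ω i q) (fun q => Φ q * stepIntercept γ vm vp Ω i q) where
  continuous_slope := hΦ.mul (continuous_stepSlope i)
  continuous_intercept := hΦ.mul (continuous_stepIntercept i)
  hasCompactSupport_slope := hΦs.mul_right
  hasCompactSupport_intercept := hΦs.mul_right
  ofReal_slope_le q := ENNReal.ofReal_le_ofReal
    (mul_le_mul_of_nonneg_left (stepSlope_le_pres hγ hvp hvv i q) (hΦ0 q))
  ofReal_affine_le q _ ht := ofReal_affine_le_ofReal_mul_QrelE (hΦ0 q)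
    (fun _ ht' => stepSlope_mul_add_stepIntercept_le hγ hvp hvv i q ht') ht

lemma ofReal_mul_QrelE_le_iSup_step (hγ : 1 < γ) (hvp : 0 < vp) (hvv : vp ≤ vm) {c : ℝ}
    (hc : 0 ≤ c) {q : α} (hq : q ∉ frontier Ω) {t : ℝ≥0∞} (ht : t ≠ ∞) :
    ENNReal.ofReal c * QrelE γ t (if q ∈ Ω then vm else vp) ≤
      ⨆ i, ENNReal.ofReal (c * stepSlope γ vm vp Ω i q * t.toReal +
        c * stepIntercept γ vm vp Ω i q) := by
  by_cases hqi : q ∈ interior Ω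
  · obtain ⟨n, hn⟩ := exists_cutoff_eq_zero (E := Ωᶜ) (q := q)
      (by rwa [closure_compl, mem_compl_iff, not_not])
    rw [if_pos (interior_subset hqi)]
    refine (ofReal_mul_QrelE_le_iSup hγ hc (hvp.trans_le hvv) ht).trans
      (iSup_le fun u => le_iSup_of_le (.inl (u, n)) (le_of_eq ?_))
    rw [QrelTangent_eq_add_zero]
    simp only [stepSlope, stepIntercept, hn]
    ring_nf
  · have hqc : q ∉ closure Ω := fun h => hq ⟨h, hqi⟩
    obtain ⟨n, hn⟩ := exists_cutoff_eq_zero hqc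
    rw [if_neg fun h => hqc (subset_closure h)]
    refine (ofReal_mul_QrelE_le_iSup hγ hc hvp ht).trans
      (iSup_le fun r => le_iSup_of_le (.inr (r, n)) (le_of_eq ?_))
    rw [QrelTangent_eq_add_zero]
    simp only [stepSlope, stepIntercept, hn]
    ring_nf

lemma ofReal_mul_pres_le_iSup_step (hγ : 0 < γ) (c : ℝ) (q : α) :
    ENNReal.ofReal (c * pres γ (if q ∈ closure Ω then vm else vp)) ≤
      ⨆ i, ENNReal.ofReal (c * stepSlope γ vm vp Ω i q) := by
  split_ifs with hq
  · exact (ofReal_mul_pres_le_iSup hγ).trans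
      (iSup_le fun u => le_iSup_of_le (.inl (u, 0)) le_rfl)
  · obtain ⟨n, hn⟩ := exists_cutoff_eq_zero hq
    refine (ofReal_mul_pres_le_iSup hγ).trans
      (iSup_le fun r => le_iSup_of_le (.inr (r, n)) (le_of_eq ?_))
    simp [stepSlope, hn]

end StepProfile

theorem stmt15_general (γ vp vm C₀ : ℝ) (hγ : 1 < γ) (hvp : 0 < vp) (hvv : vp < vm)
    (Ω : Set (ℝ × ℝ))
    (hfr : volume (frontier Ω) = 0)
    (vbar Vbar : ℝ × ℝ → ℝ)
    (hvbar : vbar = fun q => if q ∈ Ω then vm else vp)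
    (hVbar : Vbar = fun q => if q ∈ closure Ω then vm else vp)
    (Φ : ℝ × ℝ → ℝ) (hΦc : Continuous Φ) (hΦs : HasCompactSupport Φ)
    (hΦnn : ∀ q, 0 ≤ Φ q)
    (vk : ℕ → Measure (ℝ × ℝ))
    (hvkfin : ∀ k, IsFiniteMeasureOnCompacts (vk k))
    (hbound : ∀ k,
      (∫⁻ q, ENNReal.ofReal (Φ q) * QrelE γ ((vk k).rnDeriv volume q) (vbar q)) +
      (∫⁻ q, ENNReal.ofReal (Φ q * pres γ (Vbar q)) ∂((vk k).singularPart volume))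
        ≤ ENNReal.ofReal C₀)
    (vinf : Measure (ℝ × ℝ)) (hvinffin : IsFiniteMeasureOnCompacts vinf)
    (hconv : ∀ ψ : ℝ × ℝ → ℝ, Continuous ψ → HasCompactSupport ψ →
      Filter.Tendsto (fun k => ∫ q, ψ q ∂(vk k)) Filter.atTop (nhds (∫ q, ψ q ∂vinf))) :
    (∫⁻ q, ENNReal.ofReal (Φ q) * QrelE γ (vinf.rnDeriv volume q) (vbar q)) +
    (∫⁻ q, ENNReal.ofReal (Φ q * pres γ (Vbar q)) ∂(vinf.singularPart volume))
      ≤ ENNReal.ofReal C₀ := by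
  subst hvbar hVbar
  exact measureFunctional_le_of_tendsto (μ := vinf)
    (isAffineMinorant_step hγ hvp hvv.le hΦc hΦs hΦnn)
    ((measure_eq_zero_iff_ae_notMem.1 hfr).mono fun q hq _ ht =>
      ofReal_mul_QrelE_le_iSup_step hγ hvp hvv.le (hΦnn q) hq ht)
    (fun q => ofReal_mul_pres_le_iSup_step (by linarith) (Φ q) q) hvkfin hbound hconv

/-- Weak lower semicontinuity of the relative entropy with respect to a moving step function. -/
theorem stmt15 (γ T vp vm C₀ : ℝ) (hγ : 1 < γ) (hT : 0 < T) (hvp : 0 < vp) (hvv : vp < vm)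
    (hC₀ : 0 < C₀)
    (X : ℝ → ℝ) (hX : BoundedVariationOn X (Set.Ioo 0 T))
    (Ω : Set (ℝ × ℝ)) (hΩ : Ω = {q : ℝ × ℝ | q.1 ∈ Set.Ioo 0 T ∧ q.2 < X q.1})
    (hfr : volume (frontier Ω) = 0)
    (vbar Vbar : ℝ × ℝ → ℝ)
    (hvbar : vbar = fun q => if q ∈ Ω then vm else vp)
    (hVbar : Vbar = fun q => if q ∈ closure Ω then vm else vp)
    (Φ : ℝ × ℝ → ℝ) (hΦc : Continuous Φ) (hΦs : HasCompactSupport Φ)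
    (hΦsupp : tsupport Φ ⊆ Set.Ioo 0 T ×ˢ (Set.univ : Set ℝ))
    (hΦnn : ∀ q, 0 ≤ Φ q)
    (vk : ℕ → Measure (ℝ × ℝ))
    (hvkfin : ∀ k, IsFiniteMeasureOnCompacts (vk k))
    (hbound : ∀ k,
      (∫⁻ q, ENNReal.ofReal (Φ q) * QrelE γ ((vk k).rnDeriv volume q) (vbar q)) +
      (∫⁻ q, ENNReal.ofReal (Φ q * pres γ (Vbar q)) ∂((vk k).singularPart volume))
        ≤ ENNReal.ofReal C₀)
    (vinf : Measure (ℝ × ℝ)) (hvinffin : IsFiniteMeasureOnCompacts vinf)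
    (hconv : ∀ ψ : ℝ × ℝ → ℝ, Continuous ψ → HasCompactSupport ψ →
      Filter.Tendsto (fun k => ∫ q, ψ q ∂(vk k)) Filter.atTop (nhds (∫ q, ψ q ∂vinf))) :
    (∫⁻ q, ENNReal.ofReal (Φ q) * QrelE γ (vinf.rnDeriv volume q) (vbar q)) +
    (∫⁻ q, ENNReal.ofReal (Φ q * pres γ (Vbar q)) ∂(vinf.singularPart volume))
      ≤ ENNReal.ofReal C₀ :=
  stmt15_general γ vp vm C₀ hγ hvp hvv Ω hfr vbar Vbar hvbar hVbar Φ hΦc hΦs hΦnn vk hvkfin hbound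
    vinf hvinffin hconv
end
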